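/- arXiv:1206.0102 — 9 statements merged into one kernel-verified Lean document; each statement's English description precedes it below -/
import Mathlib

section
/- Let n ≥ 2, σ > 0, c ∈ ℝ^{n-1} with c ≠ 0, and B ∈ S_{n-1} a real symmetric positive definite matrix. Then the function f(x) = cᵀx − σ·log(1 − xᵀB⁻¹x), defined on the open set {x ∈ ℝ^{n-1} : xᵀB⁻¹x < 1}, attains its minimum at the unique point x* = −((√(σ² + γ) − σ)/γ)·Bc, where γ = cᵀBc > 0. -/
/-!
Write `A = B⁻¹` and `t = (√(σ² + γ) − σ)/γ`, the positive root of `γt² + 2σt = 1`.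
Then `A x* = −t c`, so `1 − x*ᵀAx* = 2σt` and the gradient `c + 2σ A x* / (1 − x*ᵀAx*)` of `f`
vanishes at `x*`. Expanding the quadratic form around `x*` and using `log u ≤ u − 1` gives
`σ (x − x*)ᵀA(x − x*) ≤ (1 − x*ᵀAx*) (f x − f x*)` on the whole ellipsoid, which yields both
minimality and, `A` being positive definite, uniqueness of the minimiser.
-/

open Matrix

theorem sqrt_sq_add_sub_div_pos (σ : ℝ) {γ : ℝ} (hγ : 0 < γ) : 0 < (√(σ ^ 2 + γ) - σ) / γ := by
  refine div_pos (sub_pos.2 ?_) hγ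
  calc σ ≤ |σ| := le_abs_self σ
    _ = √(σ ^ 2) := (Real.sqrt_sq_eq_abs σ).symm
    _ < √(σ ^ 2 + γ) := Real.sqrt_lt_sqrt (sq_nonneg σ) (by linarith)

theorem mul_sqrt_sq_add_sub_div_sq_add_two_mul (σ : ℝ) {γ : ℝ} (hγ : 0 < γ) :
    γ * ((√(σ ^ 2 + γ) - σ) / γ) ^ 2 + 2 * σ * ((√(σ ^ 2 + γ) - σ) / γ) = 1 := by
  have hs : √(σ ^ 2 + γ) ^ 2 = σ ^ 2 + γ := Real.sq_sqrt (by positivity)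
  field_simp
  linear_combination hs

namespace Matrix

variable {ι : Type*} [Fintype ι]

noncomputable def logBarrier (A : Matrix ι ι ℝ) (c : ι → ℝ) (σ : ℝ) (x : ι → ℝ) : ℝ :=
  c ⬝ᵥ x - σ * Real.log (1 - x ⬝ᵥ A *ᵥ x)

theorem IsHermitian.add_dotProduct_mulVec_add {A : Matrix ι ι ℝ} (hA : A.IsHermitian)
    (y d : ι → ℝ) :
    (y + d) ⬝ᵥ A *ᵥ (y + d) = y ⬝ᵥ A *ᵥ y + 2 * (d ⬝ᵥ A *ᵥ y) + d ⬝ᵥ A *ᵥ d := by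
  have hsymm : y ⬝ᵥ A *ᵥ d = d ⬝ᵥ A *ᵥ y := by
    rw [dotProduct_mulVec, ← mulVec_transpose, ← conjTranspose_eq_transpose_of_trivial, hA.eq,
      dotProduct_comm]
  simp only [mulVec_add, dotProduct_add, add_dotProduct, hsymm]
  ring

section Stationary

variable {A : Matrix ι ι ℝ} {c xs : ι → ℝ} {σ : ℝ}

/- `hstat` says that the gradient `c + 2σ A xs / (1 - xsᵀ A xs)` of `logBarrier A c σ`
vanishes at `xs`. -/
theorem IsHermitian.le_mul_logBarrier_sub_of_stationary (hA : A.IsHermitian) (hσ : 0 ≤ σ)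
    (hxs : xs ⬝ᵥ A *ᵥ xs < 1)
    (hstat : (2 * σ) • (A *ᵥ xs) = -(1 - xs ⬝ᵥ A *ᵥ xs) • c)
    {x : ι → ℝ} (hx : x ⬝ᵥ A *ᵥ x < 1) :
    σ * ((x - xs) ⬝ᵥ A *ᵥ (x - xs)) ≤
      (1 - xs ⬝ᵥ A *ᵥ xs) * (logBarrier A c σ x - logBarrier A c σ xs) := by
  set r := 1 - xs ⬝ᵥ A *ᵥ xs
  set d := x - xs
  have hr : 0 < r := sub_pos.2 hxs
  have hexpand := hA.add_dotProduct_mulVec_add xs d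
  rw [add_sub_cancel] at hexpand
  have hcross : 2 * σ * (d ⬝ᵥ A *ᵥ xs) = -r * (c ⬝ᵥ d) := by
    simpa only [dotProduct_smul, smul_eq_mul, dotProduct_comm d c] using congrArg (d ⬝ᵥ ·) hstat
  have hlog : r * (Real.log (1 - x ⬝ᵥ A *ᵥ x) - Real.log r) ≤ (1 - x ⬝ᵥ A *ᵥ x) - r := by
    have hpos : 0 < (1 - x ⬝ᵥ A *ᵥ x) / r := div_pos (sub_pos.2 hx) hr
    rw [← Real.log_div (sub_pos.2 hx).ne' hr.ne']
    calc r * Real.log ((1 - x ⬝ᵥ A *ᵥ x) / r) ≤ r * ((1 - x ⬝ᵥ A *ᵥ x) / r - 1) :=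
          mul_le_mul_of_nonneg_left (Real.log_le_sub_one_of_pos hpos) hr.le
      _ = (1 - x ⬝ᵥ A *ᵥ x) - r := by field_simp
  have hcd : c ⬝ᵥ x - c ⬝ᵥ xs = c ⬝ᵥ d := (dotProduct_sub c x xs).symm
  unfold logBarrier
  nlinarith [mul_le_mul_of_nonneg_left hlog hσ]

theorem PosSemidef.logBarrier_le_of_stationary (hA : A.PosSemidef) (hσ : 0 ≤ σ)
    (hxs : xs ⬝ᵥ A *ᵥ xs < 1)
    (hstat : (2 * σ) • (A *ᵥ xs) = -(1 - xs ⬝ᵥ A *ᵥ xs) • c)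
    {x : ι → ℝ} (hx : x ⬝ᵥ A *ᵥ x < 1) :
    logBarrier A c σ xs ≤ logBarrier A c σ x := by
  have hgap := hA.isHermitian.le_mul_logBarrier_sub_of_stationary hσ hxs hstat hx
  have hq : 0 ≤ σ * ((x - xs) ⬝ᵥ A *ᵥ (x - xs)) := by
    simpa using mul_nonneg hσ (hA.dotProduct_mulVec_nonneg (x - xs))
  nlinarith [sub_pos.2 hxs]

theorem PosDef.eq_of_logBarrier_eq_of_stationary (hA : A.PosDef) (hσ : 0 < σ)
    (hxs : xs ⬝ᵥ A *ᵥ xs < 1)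
    (hstat : (2 * σ) • (A *ᵥ xs) = -(1 - xs ⬝ᵥ A *ᵥ xs) • c)
    {x : ι → ℝ} (hx : x ⬝ᵥ A *ᵥ x < 1) (heq : logBarrier A c σ x = logBarrier A c σ xs) :
    x = xs := by
  have hgap := hA.isHermitian.le_mul_logBarrier_sub_of_stationary hσ.le hxs hstat hx
  rw [heq, sub_self, mul_zero] at hgap
  by_contra hne
  have hd := hA.dotProduct_mulVec_pos (sub_ne_zero.2 hne)
  simp only [star_trivial] at hd
  nlinarith

end Stationary

end Matrix

theorem block_coordinate_minimizer_general (n : ℕ) (σ : ℝ) (hσ : 0 < σ)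
    (c : Fin (n - 1) → ℝ) (hc : c ≠ 0)
    (B : Matrix (Fin (n - 1)) (Fin (n - 1)) ℝ) (hB : B.PosDef) :
    0 < c ⬝ᵥ B.mulVec c ∧
    ∀ γ : ℝ, γ = c ⬝ᵥ B.mulVec c →
    ∀ xstar : Fin (n - 1) → ℝ,
      xstar = (-((Real.sqrt (σ ^ 2 + γ) - σ) / γ)) • B.mulVec c →
      xstar ⬝ᵥ B⁻¹.mulVec xstar < 1 ∧
      (∀ x : Fin (n - 1) → ℝ, x ⬝ᵥ B⁻¹.mulVec x < 1 →
        c ⬝ᵥ xstar - σ * Real.log (1 - xstar ⬝ᵥ B⁻¹.mulVec xstar)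
          ≤ c ⬝ᵥ x - σ * Real.log (1 - x ⬝ᵥ B⁻¹.mulVec x)) ∧
      (∀ x : Fin (n - 1) → ℝ, x ⬝ᵥ B⁻¹.mulVec x < 1 →
        c ⬝ᵥ x - σ * Real.log (1 - x ⬝ᵥ B⁻¹.mulVec x)
          = c ⬝ᵥ xstar - σ * Real.log (1 - xstar ⬝ᵥ B⁻¹.mulVec xstar) → x = xstar) := by
  have hγ : 0 < c ⬝ᵥ B *ᵥ c := by simpa using hB.dotProduct_mulVec_pos hc
  refine ⟨hγ, ?_⟩
  rintro γ rfl xstar hxstar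
  set t := (√(σ ^ 2 + c ⬝ᵥ B *ᵥ c) - σ) / c ⬝ᵥ B *ᵥ c
  have hAx : B⁻¹ *ᵥ xstar = (-t) • c := by
    rw [hxstar, mulVec_smul, mulVec_mulVec,
      nonsing_inv_mul _ ((isUnit_iff_isUnit_det B).1 hB.isUnit), one_mulVec]
  have hq : xstar ⬝ᵥ B⁻¹ *ᵥ xstar = 1 - 2 * σ * t := by
    rw [hAx, dotProduct_smul, hxstar, smul_dotProduct, dotProduct_comm, smul_eq_mul, smul_eq_mul]
    linear_combination mul_sqrt_sq_add_sub_div_sq_add_two_mul σ hγ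
  have hdom : xstar ⬝ᵥ B⁻¹ *ᵥ xstar < 1 := by
    rw [hq]; linarith [mul_pos hσ (sqrt_sq_add_sub_div_pos σ hγ)]
  have hstat : (2 * σ) • (B⁻¹ *ᵥ xstar) = -(1 - xstar ⬝ᵥ B⁻¹ *ᵥ xstar) • c := by
    rw [hq, hAx, smul_smul]
    congr 1
    ring
  exact ⟨hdom, fun x hx ↦ hB.inv.posSemidef.logBarrier_le_of_stationary hσ.le hdom hstat hx,
    fun x hx ↦ hB.inv.eq_of_logBarrier_eq_of_stationary hσ hdom hstat hx⟩

/-- For `n ≥ 2`, `σ > 0`, `c ≠ 0` and `B` symmetric positive definite,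
the function `f(x) = cᵀx − σ·log(1 − xᵀB⁻¹x)` on `{x : xᵀB⁻¹x < 1}` attains its minimum
at the unique point `x* = −((√(σ² + γ) − σ)/γ)·Bc`, where `γ = cᵀBc > 0`. -/
theorem block_coordinate_minimizer (n : ℕ) (hn : 2 ≤ n) (σ : ℝ) (hσ : 0 < σ)
    (c : Fin (n - 1) → ℝ) (hc : c ≠ 0)
    (B : Matrix (Fin (n - 1)) (Fin (n - 1)) ℝ) (hBsymm : B.IsSymm) (hB : B.PosDef) :
    0 < c ⬝ᵥ B.mulVec c ∧
    ∀ γ : ℝ, γ = c ⬝ᵥ B.mulVec c →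
    ∀ xstar : Fin (n - 1) → ℝ,
      xstar = (-((Real.sqrt (σ ^ 2 + γ) - σ) / γ)) • B.mulVec c →
      xstar ⬝ᵥ B⁻¹.mulVec xstar < 1 ∧
      (∀ x : Fin (n - 1) → ℝ, x ⬝ᵥ B⁻¹.mulVec x < 1 →
        c ⬝ᵥ xstar - σ * Real.log (1 - xstar ⬝ᵥ B⁻¹.mulVec xstar)
          ≤ c ⬝ᵥ x - σ * Real.log (1 - x ⬝ᵥ B⁻¹.mulVec x)) ∧
      (∀ x : Fin (n - 1) → ℝ, x ⬝ᵥ B⁻¹.mulVec x < 1 →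
        c ⬝ᵥ x - σ * Real.log (1 - x ⬝ᵥ B⁻¹.mulVec x)
          = c ⬝ᵥ xstar - σ * Real.log (1 - xstar ⬝ᵥ B⁻¹.mulVec xstar) → x = xstar) :=
  block_coordinate_minimizer_general n σ hσ c hc B hB
end

section
/- Let A ∈ ℂ^{n×p} and let A† denote its Moore–Penrose pseudoinverse. Define F = {V ∈ H_n : (I − AA†) V (I − AA†) = 0}. Then for every Hermitian matrix V ∈ H_n with V ⪰ 0, the distance from V to F in the trace norm satisfies d₁(V, F) = Tr(V(I − AA†)), where d₁(V, F) = inf_{W ∈ F} ‖V − W‖₁. -/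
/-!
Let `P = I - AA†`, an orthogonal projection by the Penrose conditions. The matrix
`W = V - PVP` lies in `F`, and `V - W = PVP ⪰ 0` has trace norm `Tr(PVP) = Tr(VP)`.
Conversely, if `H` is Hermitian and `0 ⪯ P ⪯ I`, then `Tr(HP) ≤ Tr(|H|P) ≤ Tr|H| = ‖H‖₁`,
because the trace of a product of positive semidefinite matrices is nonnegative. For `W ∈ F`,
`Tr(WP) = Tr(PWP) = 0`, hence `Tr(VP) = Tr((V - W)P) ≤ ‖V - W‖₁`.
-/

open Matrix ComplexOrder

/-- The trace (nuclear) norm of a complex square matrix: the sum of its singular values,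
i.e. of the square roots of the eigenvalues of `Mᴴ * M`. -/
noncomputable def traceNorm {n : ℕ} (M : Matrix (Fin n) (Fin n) ℂ) : ℝ :=
  ∑ i, Real.sqrt ((Matrix.posSemidef_conjTranspose_mul_self M).1.eigenvalues i)

open scoped MatrixOrder

namespace Matrix

section Ring

variable {m n p R : Type*} [Fintype m] [Fintype n] [Fintype p]

lemma trace_conj_of_isIdempotentElem [CommSemiring R] {P : Matrix n n R}
    (hP : IsIdempotentElem P) (W : Matrix n n R) : (P * W * P).trace = (W * P).trace := by
  rw [mul_assoc, trace_mul_comm, mul_assoc, hP.eq]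

lemma isStarProjection_mul_of_penrose [NonUnitalSemiring R] [StarRing R]
    {A : Matrix m p R} {B : Matrix p m R} (hBAB : B * A * B = B) (hAB : (A * B)ᴴ = A * B) :
    IsStarProjection (A * B) where
  isIdempotentElem := by rw [IsIdempotentElem, Matrix.mul_assoc, ← Matrix.mul_assoc B, hBAB]
  isSelfAdjoint := hAB

end Ring

variable {n 𝕜 : Type*} [Fintype n] [DecidableEq n] [RCLike 𝕜]

lemma IsHermitian.trace_cfc {A : Matrix n n 𝕜} (hA : A.IsHermitian) (f : ℝ → ℝ) :
    (cfc f A).trace = ∑ i, (f (hA.eigenvalues i) : 𝕜) := by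
  rw [hA.cfc_eq, IsHermitian.cfc, Unitary.conjStarAlgAut_apply, trace_mul_cycle,
    Unitary.coe_star_mul_self, one_mul, trace_diagonal]
  rfl

lemma PosSemidef.trace_sqrt {A : Matrix n n 𝕜} (hA : A.PosSemidef) :
    (CFC.sqrt A).trace = ∑ i, (√(hA.1.eigenvalues i) : 𝕜) := by
  rw [CFC.sqrt_eq_real_sqrt A hA.nonneg, cfcₙ_eq_cfc, hA.1.trace_cfc]

lemma trace_mul_nonneg {A B : Matrix n n 𝕜} (hA : 0 ≤ A) (hB : 0 ≤ B) : 0 ≤ (A * B).trace := by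
  rw [← CFC.sqrt_mul_sqrt_self A, mul_assoc, trace_mul_comm]
  exact ((CFC.sqrt_nonneg A).isSelfAdjoint.conjugate_nonneg hB).posSemidef.trace_nonneg

lemma IsHermitian.trace_mul_le_trace_abs {H P : Matrix n n 𝕜} (hH : H.IsHermitian)
    (hP₀ : 0 ≤ P) (hP₁ : P ≤ 1) : (H * P).trace ≤ (CFC.abs H).trace := by
  have hH_le : H ≤ CFC.abs H := by
    rw [← sub_nonneg, CFC.abs_sub_self H hH]
    exact smul_nonneg zero_le_two (CFC.negPart_nonneg H)
  have h₁ := trace_mul_nonneg (sub_nonneg.mpr hH_le) hP₀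
  have h₂ := trace_mul_nonneg (CFC.abs_nonneg H) (sub_nonneg.mpr hP₁)
  rw [← sub_nonneg]
  convert add_nonneg h₁ h₂ using 1
  simp only [sub_mul, mul_sub, mul_one, trace_sub]
  ring

end Matrix

section TraceNorm

variable {n : ℕ}

lemma traceNorm_eq_re_trace_abs (M : Matrix (Fin n) (Fin n) ℂ) :
    traceNorm M = (CFC.abs M).trace.re := by
  rw [CFC.abs, star_eq_conjTranspose, (posSemidef_conjTranspose_mul_self M).trace_sqrt,
    Complex.re_sum]
  rfl

lemma traceNorm_of_nonneg {M : Matrix (Fin n) (Fin n) ℂ} (hM : 0 ≤ M) :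
    traceNorm M = M.trace.re := by
  rw [traceNorm_eq_re_trace_abs, CFC.abs_of_nonneg M]

lemma re_trace_mul_le_traceNorm {H P : Matrix (Fin n) (Fin n) ℂ} (hH : H.IsHermitian)
    (hP₀ : 0 ≤ P) (hP₁ : P ≤ 1) : (H * P).trace.re ≤ traceNorm H := by
  rw [traceNorm_eq_re_trace_abs]
  exact Complex.re_le_re (hH.trace_mul_le_trace_abs hP₀ hP₁)

end TraceNorm

/-- For `F = {W ∈ H_n : (I − AA†) W (I − AA†) = 0}` and every positive
semidefinite Hermitian `V`, the trace-norm distance from `V` to `F` equals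
`Tr(V(I − AA†))`.  Here `Ad` is the Moore–Penrose pseudoinverse of `A`, characterized by
the four Penrose conditions. -/
theorem dist_to_F_eq_trace {n p : ℕ}
    (A : Matrix (Fin n) (Fin p) ℂ) (Ad : Matrix (Fin p) (Fin n) ℂ)
    (hPenrose : A * Ad * A = A ∧ Ad * A * Ad = Ad ∧
      (A * Ad)ᴴ = A * Ad ∧ (Ad * A)ᴴ = Ad * A)
    (V : Matrix (Fin n) (Fin n) ℂ) (hV : V.PosSemidef) :
    sInf {r : ℝ | ∃ W : Matrix (Fin n) (Fin n) ℂ, W.IsHermitian ∧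
        (1 - A * Ad) * W * (1 - A * Ad) = 0 ∧ r = traceNorm (V - W)} =
      (Matrix.trace (V * (1 - A * Ad))).re := by
  set P := 1 - A * Ad
  have hP : IsStarProjection P :=
    (isStarProjection_mul_of_penrose hPenrose.2.1 hPenrose.2.2.1).one_sub
  have hPVP : 0 ≤ P * V * P := hP.isSelfAdjoint.conjugate_nonneg hV.nonneg
  refine IsLeast.csInf_eq ⟨⟨V - P * V * P, hV.1.sub hPVP.isSelfAdjoint, ?_, ?_⟩, ?_⟩
  · simp only [mul_sub, sub_mul, mul_assoc, hP.isIdempotentElem.mul_self_mul,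
      hP.isIdempotentElem.eq, sub_self]
  · rw [sub_sub_cancel, traceNorm_of_nonneg hPVP,
      trace_conj_of_isIdempotentElem hP.isIdempotentElem]
  · rintro _ ⟨W, hW, hPWP, rfl⟩
    calc (V * P).trace.re = ((V - W) * P).trace.re := by
          rw [sub_mul, trace_sub, ← trace_conj_of_isIdempotentElem hP.isIdempotentElem W, hPWP,
            trace_zero, sub_zero]
      _ ≤ traceNorm (V - W) := re_trace_mul_le_traceNorm (hV.1.sub hW) hP.nonneg hP.le_one
end

section
/- Let A ∈ ℂ^{n×p} be injective and b ∈ ℝⁿ with b_i ≠ 0 for i = 1,…,n, and assume there exists x ∈ ℂ^p with |Ax| = b (entrywise moduli). Let a_i* denote the i-th row of A and M = diag(b)(I − AA†)diag(b). Then the map Φ : H_p → H_n, Φ(X) = diag(b)⁻¹ A X A* diag(b)⁻¹, is a bijection from the set {X ∈ H_p : X ⪰ 0, Tr(a_i a_i* X) = b_i² for i = 1,…,n} (the feasible set of PhaseLift) onto the set {U ∈ H_n : U ⪰ 0, diag(U) = 1, Tr(MU) = 0} (the feasible set of PhaseCutMod). -/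
/-!
With `D = diag(b)`, the map is the congruence `X ↦ B X Bᴴ` by `B = D⁻¹A`, and `C = A†D` is a left
inverse of `B` because an injective `A` satisfies `A†A = 1`. Such a congruence is injective and
maps the positive semidefinite cone onto the positive semidefinite `U` with `B C U = U`. The
PhaseLift constraints `Tr(aᵢaᵢ*X) = bᵢ²` become `Uᵢᵢ = 1`. Finally `M = D(1 - AA†)D` is positive
semidefinite, since `1 - AA†` is an orthogonal projection, so for `U ⪰ 0` the condition
`Tr(MU) = 0` amounts to `MU = 0`, i.e. `AA†DU = DU`, i.e. `B C U = U`.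
-/

open Matrix ComplexOrder

namespace Matrix

variable {m n R : Type*} [Fintype n]

theorem trace_vecMulVec_star_mul [CommSemiring R] [StarRing R] (A : Matrix m n R)
    (X : Matrix n n R) (i : m) :
    trace (vecMulVec (star (A i)) (A i) * X) = (A * X * Aᴴ) i i := by
  simp only [trace, diag, mul_apply, vecMulVec_apply, conjTranspose_apply, Pi.star_apply,
    Finset.sum_mul]
  exact Finset.sum_congr rfl fun j _ => Finset.sum_congr rfl fun k _ => by ring

theorem mul_eq_one_of_mul_mul_eq_self [Fintype m] [Semiring R] [DecidableEq n]
    {A : Matrix m n R} {B : Matrix n m R} (hA : Function.Injective A.mulVec)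
    (h : A * B * A = A) : B * A = 1 :=
  ext_of_mulVec_single fun _ => hA <| by rw [mulVec_mulVec, ← Matrix.mul_assoc, h, one_mulVec]

theorem IsHermitian.mul_mul_conjTranspose_mul_mul_conjTranspose_eq_self [Fintype m] [Semiring R]
    [StarRing R] {B : Matrix m n R} {C : Matrix n m R} {U : Matrix m m R} (hU : U.IsHermitian)
    (hBC : B * C * U = U) :
    B * (C * U * Cᴴ) * Bᴴ = U := by
  calc B * (C * U * Cᴴ) * Bᴴ = B * C * U * (B * C)ᴴ := by
        simp only [conjTranspose_mul, Matrix.mul_assoc]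
    _ = U * (B * C)ᴴ := by rw [hBC]
    _ = (B * C * U)ᴴ := by rw [conjTranspose_mul (B * C) U, hU.eq]
    _ = U := by rw [hBC, hU.eq]

open scoped MatrixOrder in
theorem PosSemidef.trace_mul_eq_zero_iff {𝕜 : Type*} [RCLike 𝕜] [DecidableEq n]
    {P U : Matrix n n 𝕜} (hP : P.PosSemidef) (hU : U.PosSemidef) :
    trace (P * U) = 0 ↔ P * U = 0 := by
  refine ⟨fun h => ?_, fun h => by rw [h, trace_zero]⟩
  set S := CFC.sqrt P * CFC.sqrt U
  have hP' : (CFC.sqrt P)ᴴ = CFC.sqrt P := (CFC.sqrt_nonneg P).isSelfAdjoint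
  have hU' : (CFC.sqrt U)ᴴ = CFC.sqrt U := (CFC.sqrt_nonneg U).isSelfAdjoint
  -- `tr (P U) = ‖√P √U‖²` in the Frobenius norm
  have hS : S = 0 := by
    rw [← trace_conjTranspose_mul_self_eq_zero_iff]
    calc trace (Sᴴ * S) = trace (CFC.sqrt U * (CFC.sqrt P * CFC.sqrt P * CFC.sqrt U)) := by
          simp only [S, conjTranspose_mul, hP', hU', Matrix.mul_assoc]
      _ = trace (P * U) := by
          rw [trace_mul_comm, Matrix.mul_assoc, CFC.sqrt_mul_sqrt_self P hP.nonneg,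
            CFC.sqrt_mul_sqrt_self U hU.nonneg]
      _ = 0 := h
  calc P * U = CFC.sqrt P * CFC.sqrt P * (CFC.sqrt U * CFC.sqrt U) := by
        rw [CFC.sqrt_mul_sqrt_self P hP.nonneg, CFC.sqrt_mul_sqrt_self U hU.nonneg]
    _ = CFC.sqrt P * S * CFC.sqrt U := by simp only [S, Matrix.mul_assoc]
    _ = 0 := by rw [hS, Matrix.mul_zero, Matrix.zero_mul]

theorem inv_diagonal_of_ne_zero [DecidableEq n] {K : Type*} [Field K] {d : n → K}
    (hd : ∀ i, d i ≠ 0) : (diagonal d)⁻¹ = diagonal fun i => (d i)⁻¹ :=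
  inv_eq_left_inv <| by
    rw [diagonal_mul_diagonal, ← diagonal_one]
    exact congrArg diagonal (funext fun i => inv_mul_cancel₀ (hd i))

open scoped MatrixOrder in
theorem posSemidef_one_sub_mul_of_mul_mul_eq_self [Fintype m] [DecidableEq m] {𝕜 : Type*}
    [RCLike 𝕜] {A : Matrix m n 𝕜} {B : Matrix n m 𝕜} (hABA : A * B * A = A)
    (hAB : (A * B)ᴴ = A * B) : (1 - A * B).PosSemidef :=
  (IsStarProjection.one_sub_nonneg
    ⟨by rw [IsIdempotentElem, ← Matrix.mul_assoc, hABA], hAB⟩).posSemidef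

theorem bijOn_mul_mul_conjTranspose [Fintype m] [DecidableEq n] {𝕜 : Type*} [RCLike 𝕜]
    {B : Matrix m n 𝕜} {C : Matrix n m 𝕜} (hCB : C * B = 1) (P : Matrix m m 𝕜 → Prop) :
    Set.BijOn (fun X : Matrix n n 𝕜 => B * X * Bᴴ) {X | X.PosSemidef ∧ P (B * X * Bᴴ)}
      {U | U.PosSemidef ∧ P U ∧ B * C * U = U} := by
  have hrec : ∀ X : Matrix n n 𝕜, C * (B * X * Bᴴ) * Cᴴ = X := fun X => by
    rw [show C * (B * X * Bᴴ) * Cᴴ = C * B * X * (C * B)ᴴ by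
      simp only [conjTranspose_mul, Matrix.mul_assoc], hCB, conjTranspose_one, Matrix.one_mul,
      Matrix.mul_one]
  refine ⟨fun X ⟨hX, hPX⟩ => ⟨hX.mul_mul_conjTranspose_same B, hPX, ?_⟩,
    (Function.LeftInverse.injective (g := fun U => C * U * Cᴴ) hrec).injOn,
    fun U ⟨hU, hPU, hBCU⟩ => ?_⟩
  · simp only [Matrix.mul_assoc, ← Matrix.mul_assoc C B, hCB, Matrix.one_mul]
  · have hBU := hU.isHermitian.mul_mul_conjTranspose_mul_mul_conjTranspose_eq_self hBCU
    exact ⟨C * U * Cᴴ, ⟨hU.mul_mul_conjTranspose_same C, hBU.symm ▸ hPU⟩, hBU⟩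

end Matrix

section PhaseRetrieval

variable {m n : Type*} [Fintype m] [Fintype n] [DecidableEq m] {b : m → ℝ}

omit [Fintype m] in
theorem isHermitian_diagonal_ofReal (b : m → ℝ) : (diagonal fun i => (b i : ℂ)).IsHermitian :=
  isHermitian_diagonal_of_self_adjoint _ (funext fun i => Complex.conj_ofReal (b i))

theorem inv_diagonal_ofReal_mul_mul_apply_self_eq_one_iff (hb : ∀ i, b i ≠ 0)
    (W : Matrix m m ℂ) (i : m) :
    ((diagonal fun i => (b i : ℂ))⁻¹ * W * (diagonal fun i => (b i : ℂ))⁻¹) i i = 1 ↔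
      W i i = (b i : ℂ) ^ 2 := by
  have hbi : (b i : ℂ) ≠ 0 := Complex.ofReal_ne_zero.mpr (hb i)
  rw [inv_diagonal_of_ne_zero fun j => Complex.ofReal_ne_zero.mpr (hb j), mul_diagonal,
    diagonal_mul, show (b i : ℂ)⁻¹ * W i i * (b i : ℂ)⁻¹ = W i i / (b i : ℂ) ^ 2 by ring,
    div_eq_one_iff_eq (pow_ne_zero 2 hbi)]

theorem isUnit_diagonal_ofReal (hb : ∀ i, b i ≠ 0) : IsUnit (diagonal fun i => (b i : ℂ)) :=
  isUnit_diagonal.mpr <| Pi.isUnit_iff.mpr fun i => (Complex.ofReal_ne_zero.mpr (hb i)).isUnit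

theorem trace_diagonal_mul_one_sub_mul_diagonal_mul_eq_zero_iff {A : Matrix m n ℂ}
    {Ad : Matrix n m ℂ} (hAAdA : A * Ad * A = A) (hAAd : (A * Ad)ᴴ = A * Ad)
    (hb : ∀ i, b i ≠ 0) {U : Matrix m m ℂ} (hU : U.PosSemidef) :
    trace ((diagonal fun i => (b i : ℂ)) * (1 - A * Ad) * (diagonal fun i => (b i : ℂ)) * U) =
      0 ↔
      (diagonal fun i => (b i : ℂ))⁻¹ * A * (Ad * diagonal fun i => (b i : ℂ)) * U = U := by
  set D := diagonal fun i => (b i : ℂ)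
  have hD : IsUnit D := isUnit_diagonal_ofReal hb
  have hDH : Dᴴ = D := (isHermitian_diagonal_ofReal b).eq
  have hM : (D * (1 - A * Ad) * D).PosSemidef := by
    simpa only [hDH] using
      (posSemidef_one_sub_mul_of_mul_mul_eq_self hAAdA hAAd).mul_mul_conjTranspose_same D
  rw [hM.trace_mul_eq_zero_iff hU, Matrix.mul_assoc, Matrix.mul_assoc, hD.mul_right_eq_zero,
    Matrix.sub_mul, Matrix.one_mul, sub_eq_zero, eq_comm]
  conv_rhs => rw [← hD.mul_right_inj]
  simp only [Matrix.mul_assoc, mul_nonsing_inv_cancel_left _ _ ((isUnit_iff_isUnit_det D).mp hD)]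

end PhaseRetrieval

theorem phaselift_phasecutmod_bijection_general {n p : ℕ}
    (A : Matrix (Fin n) (Fin p) ℂ) (Ad : Matrix (Fin p) (Fin n) ℂ)
    (hPenrose : A * Ad * A = A ∧ Ad * A * Ad = Ad ∧
      (A * Ad)ᴴ = A * Ad ∧ (Ad * A)ᴴ = Ad * A)
    (hinj : Function.Injective A.mulVec)
    (b : Fin n → ℝ) (hb : ∀ i, b i ≠ 0) :
    Set.BijOn
      (fun X : Matrix (Fin p) (Fin p) ℂ =>
        (Matrix.diagonal fun i => (b i : ℂ))⁻¹ * (A * X * Aᴴ) *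
          (Matrix.diagonal fun i => (b i : ℂ))⁻¹)
      {X : Matrix (Fin p) (Fin p) ℂ | X.PosSemidef ∧
        ∀ i, Matrix.trace (Matrix.vecMulVec (star (A i)) (A i) * X) = ((b i : ℂ)) ^ 2}
      {U : Matrix (Fin n) (Fin n) ℂ | U.PosSemidef ∧ (∀ i, U i i = 1) ∧
        Matrix.trace ((Matrix.diagonal fun i => (b i : ℂ)) * (1 - A * Ad) *
          (Matrix.diagonal fun i => (b i : ℂ)) * U) = 0} := by
  obtain ⟨hAAdA, -, hAAd, -⟩ := hPenrose
  set D := diagonal fun i => (b i : ℂ)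
  have hD : IsUnit D.det := (isUnit_iff_isUnit_det D).mp (isUnit_diagonal_ofReal hb)
  have hDH : Dᴴ = D := (isHermitian_diagonal_ofReal b).eq
  have hΦ : ∀ X : Matrix (Fin p) (Fin p) ℂ,
      D⁻¹ * (A * X * Aᴴ) * D⁻¹ = D⁻¹ * A * X * (D⁻¹ * A)ᴴ := fun X => by
    rw [conjTranspose_mul, conjTranspose_nonsing_inv, hDH]
    simp only [Matrix.mul_assoc]
  have hCB : Ad * D * (D⁻¹ * A) = 1 := by
    rw [Matrix.mul_assoc, mul_nonsing_inv_cancel_left _ _ hD,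
      mul_eq_one_of_mul_mul_eq_self hinj hAAdA]
  convert bijOn_mul_mul_conjTranspose hCB (fun U => ∀ i, U i i = 1) using 1
  · exact funext hΦ
  · refine Set.ext fun X => and_congr_right fun _ => forall_congr' fun i => ?_
    rw [← hΦ, trace_vecMulVec_star_mul]
    exact (inv_diagonal_ofReal_mul_mul_apply_self_eq_one_iff hb _ i).symm
  · exact Set.ext fun U => and_congr_right fun hU => and_congr_right fun _ =>
      trace_diagonal_mul_one_sub_mul_diagonal_mul_eq_zero_iff hAAdA hAAd hb hU

/-- If `A` is injective, all `bᵢ ≠ 0`, and `|Ax| = b` is solvable, then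
`Φ(X) = diag(b)⁻¹ A X A* diag(b)⁻¹` is a bijection from the PhaseLift feasible set
`{X ⪰ 0 : Tr(aᵢaᵢ*X) = bᵢ²}` onto the PhaseCutMod feasible set
`{U ⪰ 0 : diag(U) = 1, Tr(MU) = 0}`, where `M = diag(b)(I − AA†)diag(b)` and `aᵢ*` is
the `i`-th row of `A`. -/
theorem phaselift_phasecutmod_bijection {n p : ℕ}
    (A : Matrix (Fin n) (Fin p) ℂ) (Ad : Matrix (Fin p) (Fin n) ℂ)
    (hPenrose : A * Ad * A = A ∧ Ad * A * Ad = Ad ∧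
      (A * Ad)ᴴ = A * Ad ∧ (Ad * A)ᴴ = Ad * A)
    (hinj : Function.Injective A.mulVec)
    (b : Fin n → ℝ) (hb : ∀ i, b i ≠ 0)
    (x : Fin p → ℂ) (hx : ∀ i, ‖A.mulVec x i‖ = b i) :
    Set.BijOn
      (fun X : Matrix (Fin p) (Fin p) ℂ =>
        (Matrix.diagonal fun i => (b i : ℂ))⁻¹ * (A * X * Aᴴ) *
          (Matrix.diagonal fun i => (b i : ℂ))⁻¹)
      {X : Matrix (Fin p) (Fin p) ℂ | X.PosSemidef ∧
        ∀ i, Matrix.trace (Matrix.vecMulVec (star (A i)) (A i) * X) = ((b i : ℂ)) ^ 2}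
      {U : Matrix (Fin n) (Fin n) ℂ | U.PosSemidef ∧ (∀ i, U i i = 1) ∧
        Matrix.trace ((Matrix.diagonal fun i => (b i : ℂ)) * (1 - A * Ad) *
          (Matrix.diagonal fun i => (b i : ℂ)) * U) = 0} :=
  phaselift_phasecutmod_bijection_general A Ad hPenrose hinj b hb
end

section
/- Let A ∈ ℂ^{n×p} be injective, b ∈ ℝⁿ with b_i ≠ 0 for all i = 1,…,n, and assume there exists x ∈ ℂ^p with |Ax| = b. Let M = diag(b)(I − AA†)diag(b) and B = diag(b) A†* A† diag(b). If the PhaseLift problem (minimize Tr(X) over X ∈ H_p with X ⪰ 0 and Tr(a_i a_i* X) = b_i² for all i) has a unique optimal solution and this solution has rank one, then the PhaseCutMod problem (minimize Tr(BU) over U ∈ H_n with U ⪰ 0, diag(U) = 1 and Tr(MU) = 0) has a unique optimal solution and this solution has rank one. -/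
open Matrix ComplexOrder

/-- The feasible set of PhaseLift: positive semidefinite Hermitian `X` with
`Tr(aᵢaᵢ*X) = bᵢ²` for every row `aᵢ*` of `A`. -/
def phaseLiftFeasible {n p : ℕ} (A : Matrix (Fin n) (Fin p) ℂ) (b : Fin n → ℝ) :
    Set (Matrix (Fin p) (Fin p) ℂ) :=
  {X | X.PosSemidef ∧
    ∀ i, Matrix.trace (Matrix.vecMulVec (star (A i)) (A i) * X) = ((b i : ℂ)) ^ 2}

/-- The feasible set of PhaseCutMod: `U ⪰ 0`, `diag(U) = 1`, `Tr(MU) = 0` where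
`M = diag(b)(I − AA†)diag(b)`. -/
def phaseCutModFeasible {n p : ℕ} (A : Matrix (Fin n) (Fin p) ℂ)
    (Ad : Matrix (Fin p) (Fin n) ℂ) (b : Fin n → ℝ) :
    Set (Matrix (Fin n) (Fin n) ℂ) :=
  {U | U.PosSemidef ∧ (∀ i, U i i = 1) ∧
    Matrix.trace ((Matrix.diagonal fun i => (b i : ℂ)) * (1 - A * Ad) *
      (Matrix.diagonal fun i => (b i : ℂ)) * U) = 0}

/-!
The congruences `Ψ X = diag(b)⁻¹ A X A* diag(b)⁻¹` and `Φ U = A† diag(b) U diag(b) A†*` are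
mutually inverse bijections between the PhaseLift and the PhaseCutMod feasible sets, and
`Tr(Φ U) = Tr(B U)`. So `Ψ` carries the unique PhaseLift minimizer to the unique PhaseCutMod
minimizer, and it preserves rank because `Φ ∘ Ψ = id`. That `Φ ∘ Ψ = id` comes from `A† A = 1`
(injectivity of `A`); `Ψ ∘ Φ = id` on the PhaseCutMod feasible set because `Tr(M U) = 0` with
`M, U ⪰ 0` forces `M U = 0`, so the columns of `diag(b) U` lie in the range of `A`.
-/

section MinimizerTransfer

variable {α β γ : Type*} [Preorder γ] {f : α → γ} {s : Set α} {t : Set β}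
  {Φ : β → α} {Ψ : α → β}

theorem Set.InvOn.isMinOn_comp (hinv : Set.InvOn Φ Ψ s t) (hΦ : Set.MapsTo Φ t s)
    {a : α} (ha : a ∈ s) (hmin : IsMinOn f s a) : IsMinOn (f ∘ Φ) t (Ψ a) :=
  isMinOn_iff.mpr fun u hu => by
    simpa only [Function.comp_apply, hinv.1 ha] using isMinOn_iff.mp hmin _ (hΦ hu)

theorem Set.InvOn.eq_of_isMinOn_comp (hinv : Set.InvOn Φ Ψ s t) (hΦ : Set.MapsTo Φ t s)
    (hΨ : Set.MapsTo Ψ s t) {a : α} (huniq : ∀ x ∈ s, IsMinOn f s x → x = a)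
    {u : β} (hu : u ∈ t) (hmin : IsMinOn (f ∘ Φ) t u) : u = Ψ a := by
  have hΦu : IsMinOn f s (Φ u) := isMinOn_iff.mpr fun x hx => by
    simpa only [Function.comp_apply, hinv.1 hx] using isMinOn_iff.mp hmin _ (hΨ hx)
  rw [← huniq _ (hΦ hu) hΦu, hinv.2 hu]

end MinimizerTransfer

namespace Matrix

section RCLike

variable {𝕜 m : Type*} [RCLike 𝕜] [Fintype m]

theorem PosSemidef.mul_eq_zero_of_trace_mul_eq_zero [DecidableEq m] {M U : Matrix m m 𝕜}
    (hM : M.PosSemidef) (hU : U.PosSemidef) (h : (M * U).trace = 0) : M * U = 0 := by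
  open scoped MatrixOrder Matrix.Norms.L2Operator in
  obtain ⟨T, rfl⟩ := CStarAlgebra.nonneg_iff_eq_star_mul_self.mp hM.nonneg
  open scoped MatrixOrder Matrix.Norms.L2Operator in
  obtain ⟨S, rfl⟩ := CStarAlgebra.nonneg_iff_eq_star_mul_self.mp hU.nonneg
  rw [star_eq_conjTranspose, star_eq_conjTranspose] at h ⊢
  have hST : S * Tᴴ = 0 := by
    rw [← trace_conjTranspose_mul_self_eq_zero_iff, ← h, conjTranspose_mul,
      conjTranspose_conjTranspose, Matrix.mul_assoc Tᴴ, trace_mul_comm Tᴴ]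
    simp only [Matrix.mul_assoc]
  calc Tᴴ * T * (Sᴴ * S) = Tᴴ * (S * Tᴴ)ᴴ * S := by
        rw [conjTranspose_mul, conjTranspose_conjTranspose]; simp only [Matrix.mul_assoc]
    _ = 0 := by rw [hST, conjTranspose_zero, Matrix.mul_zero, Matrix.zero_mul]

theorem IsHermitian.posSemidef_of_isIdempotentElem {P : Matrix m m 𝕜} (hP : P.IsHermitian)
    (hidem : IsIdempotentElem P) : P.PosSemidef := by
  rw [← hidem.eq, ← congrArg (· * P) hP.eq]
  exact posSemidef_conjTranspose_mul_self P

end RCLike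

theorem mul_eq_one_of_mul_mul_eq_self_of_injective {R m k : Type*} [Ring R] [Fintype m]
    [Fintype k] [DecidableEq k] {A : Matrix m k R} {G : Matrix k m R} (hAGA : A * G * A = A)
    (hA : Function.Injective A.mulVec) : G * A = 1 := by
  ext i j
  have h : A *ᵥ ((G * A) *ᵥ Pi.single j 1) = A *ᵥ Pi.single j 1 := by
    rw [mulVec_mulVec, ← Matrix.mul_assoc, hAGA]
  simpa [mulVec_single, one_apply, Pi.single_apply, eq_comm] using congrFun (hA h) i

theorem trace_vecMulVec_star_row_mul {R m k : Type*} [CommSemiring R] [StarRing R] [Fintype m]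
    [Fintype k] (A : Matrix m k R) (X : Matrix k k R) (i : m) :
    (vecMulVec (star (A i)) (A i) * X).trace = (A * X * Aᴴ) i i := by
  rw [vecMulVec_mul, trace_vecMulVec, dotProduct_comm]
  simp [mul_apply, dotProduct, vecMul]

theorem mul_mul_conjTranspose_eq_of_mul_eq {R m : Type*} [Semiring R] [StarRing R] [Fintype m]
    {P Y : Matrix m m R} (hPY : P * Y = Y) (hY : Y.IsHermitian) : P * Y * Pᴴ = Y := by
  rw [hPY, ← hY.eq, ← conjTranspose_mul, hY.eq, hPY, hY.eq]

theorem rank_mul_mul_le {R l m k : Type*} [CommRing R] [StrongRankCondition R] [Fintype l]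
    [Fintype m] [Fintype k] (L : Matrix l m R) (X : Matrix m k R) (N : Matrix k l R) :
    (L * X * N).rank ≤ X.rank :=
  (rank_mul_le_left _ _).trans (rank_mul_le_right _ _)

end Matrix

section PhaseRetrieval

variable {n p : ℕ} {A : Matrix (Fin n) (Fin p) ℂ} {Ad : Matrix (Fin p) (Fin n) ℂ} {b : Fin n → ℝ}

theorem conjTranspose_diagonal_ofReal {m : Type*} [DecidableEq m] (d : m → ℝ) :
    (diagonal fun i => (d i : ℂ))ᴴ = diagonal fun i => (d i : ℂ) := by
  simp [diagonal_conjTranspose]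

theorem posSemidef_diagonal_mul_one_sub_mul_diagonal (hAAdA : A * Ad * A = A)
    (hAAdH : (A * Ad)ᴴ = A * Ad) (d : Fin n → ℝ) :
    ((diagonal fun i => (d i : ℂ)) * (1 - A * Ad) * diagonal fun i => (d i : ℂ)).PosSemidef := by
  have hidem : IsIdempotentElem (A * Ad) := by
    rw [IsIdempotentElem, ← Matrix.mul_assoc, hAAdA]
  have hP := (isHermitian_one.sub hAAdH).posSemidef_of_isIdempotentElem hidem.one_sub
  simpa only [conjTranspose_diagonal_ofReal] using hP.conjTranspose_mul_mul_same
    (diagonal fun i => (d i : ℂ))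

theorem mul_mul_diagonal_mul_of_mem_phaseCutModFeasible (hAAdA : A * Ad * A = A)
    (hAAdH : (A * Ad)ᴴ = A * Ad) (hb : ∀ i, b i ≠ 0) {U : Matrix (Fin n) (Fin n) ℂ}
    (hU : U ∈ phaseCutModFeasible A Ad b) :
    A * Ad * ((diagonal fun i => (b i : ℂ)) * U) = (diagonal fun i => (b i : ℂ)) * U := by
  set D : Matrix (Fin n) (Fin n) ℂ := diagonal fun i => (b i : ℂ)
  have hED : (diagonal fun i => (b i : ℂ)⁻¹) * D = 1 := by
    simp [D, diagonal_mul_diagonal, hb]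
  have hMU : D * (1 - A * Ad) * D * U = 0 :=
    (posSemidef_diagonal_mul_one_sub_mul_diagonal hAAdA hAAdH b).mul_eq_zero_of_trace_mul_eq_zero
      hU.1 hU.2.2
  have h : (1 - A * Ad) * (D * U) = 0 := by
    calc (1 - A * Ad) * (D * U)
        = (diagonal fun i => (b i : ℂ)⁻¹) * D * (1 - A * Ad) * (D * U) := by
          rw [hED, Matrix.one_mul]
      _ = 0 := by simp only [Matrix.mul_assoc] at hMU ⊢; rw [hMU, Matrix.mul_zero]
  rwa [Matrix.sub_mul, Matrix.one_mul, sub_eq_zero, eq_comm] at h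

theorem conj_mem_phaseCutModFeasible (hAAdA : A * Ad * A = A) (hb : ∀ i, b i ≠ 0)
    {X : Matrix (Fin p) (Fin p) ℂ} (hX : X ∈ phaseLiftFeasible A b) :
    ((diagonal fun i => (b i : ℂ)⁻¹) * A) * X * ((diagonal fun i => (b i : ℂ)⁻¹) * A)ᴴ ∈
      phaseCutModFeasible A Ad b := by
  set E : Matrix (Fin n) (Fin n) ℂ := diagonal fun i => (b i : ℂ)⁻¹
  have hEH : Eᴴ = E := by simp [E, diagonal_conjTranspose]
  have hconj : E * A * X * (E * A)ᴴ = E * (A * X * Aᴴ) * E := by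
    rw [conjTranspose_mul, hEH]; simp only [Matrix.mul_assoc]
  refine ⟨hX.1.mul_mul_conjTranspose_same _, fun i => ?_, ?_⟩
  · have hXi := hX.2 i
    rw [trace_vecMulVec_star_row_mul] at hXi
    have hbi : (b i : ℂ) ≠ 0 := Complex.ofReal_ne_zero.mpr (hb i)
    simp only [hconj, E, mul_diagonal, diagonal_mul, hXi]
    field_simp
  · set D : Matrix (Fin n) (Fin n) ℂ := diagonal fun i => (b i : ℂ)
    have hDE : D * E = 1 := by simp [D, E, diagonal_mul_diagonal, hb]
    have hPA : (1 - A * Ad) * A = 0 := by rw [Matrix.sub_mul, Matrix.one_mul, hAAdA, sub_self]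
    calc (D * (1 - A * Ad) * D * (E * A * X * (E * A)ᴴ)).trace
        = (D * ((1 - A * Ad) * A) * (X * (E * A)ᴴ)).trace := by
          simp only [Matrix.mul_assoc]; rw [← Matrix.mul_assoc D E, hDE, Matrix.one_mul]
      _ = (0 : ℂ) := by rw [hPA, Matrix.mul_zero, Matrix.zero_mul, trace_zero]

theorem conj_mem_phaseLiftFeasible (hAAdA : A * Ad * A = A) (hAAdH : (A * Ad)ᴴ = A * Ad)
    (hb : ∀ i, b i ≠ 0) {U : Matrix (Fin n) (Fin n) ℂ} (hU : U ∈ phaseCutModFeasible A Ad b) :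
    (Ad * diagonal fun i => (b i : ℂ)) * U * (Ad * diagonal fun i => (b i : ℂ))ᴴ ∈
      phaseLiftFeasible A b := by
  set D : Matrix (Fin n) (Fin n) ℂ := diagonal fun i => (b i : ℂ)
  refine ⟨hU.1.mul_mul_conjTranspose_same _, fun i => ?_⟩
  have hDUD : A * Ad * (D * U * D) * (A * Ad)ᴴ = D * U * D := by
    refine mul_mul_conjTranspose_eq_of_mul_eq ?_ ?_
    · rw [← Matrix.mul_assoc (A * Ad), mul_mul_diagonal_mul_of_mem_phaseCutModFeasible
        hAAdA hAAdH hb hU]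
    · simpa only [D, conjTranspose_diagonal_ofReal] using
        isHermitian_conjTranspose_mul_mul D hU.1.1
  have hconj : A * (Ad * D * U * (Ad * D)ᴴ) * Aᴴ = A * Ad * (D * U * D) * (A * Ad)ᴴ := by
    simp only [conjTranspose_mul, D, conjTranspose_diagonal_ofReal, Matrix.mul_assoc]
  rw [trace_vecMulVec_star_row_mul, hconj, hDUD]
  simp [D, mul_diagonal, diagonal_mul, hU.2.1 i, sq]

theorem invOn_conj_phaseLiftFeasible_phaseCutModFeasible (hAAdA : A * Ad * A = A)
    (hAAdH : (A * Ad)ᴴ = A * Ad) (hinj : Function.Injective A.mulVec) (hb : ∀ i, b i ≠ 0) :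
    Set.InvOn
      (fun U => (Ad * diagonal fun i => (b i : ℂ)) * U * (Ad * diagonal fun i => (b i : ℂ))ᴴ)
      (fun X => ((diagonal fun i => (b i : ℂ)⁻¹) * A) * X *
        ((diagonal fun i => (b i : ℂ)⁻¹) * A)ᴴ)
      (phaseLiftFeasible A b) (phaseCutModFeasible A Ad b) := by
  set D : Matrix (Fin n) (Fin n) ℂ := diagonal fun i => (b i : ℂ)
  set E : Matrix (Fin n) (Fin n) ℂ := diagonal fun i => (b i : ℂ)⁻¹
  have hDE : D * E = 1 := by simp [D, E, diagonal_mul_diagonal, hb]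
  have hAdA : Ad * A = 1 := mul_eq_one_of_mul_mul_eq_self_of_injective hAAdA hinj
  constructor
  · intro X _
    calc Ad * D * (E * A * X * (E * A)ᴴ) * (Ad * D)ᴴ
        = Ad * (D * E) * A * X * (Ad * (D * E) * A)ᴴ := by
          simp only [conjTranspose_mul, Matrix.mul_assoc]
      _ = X := by rw [hDE, Matrix.mul_one, hAdA, conjTranspose_one, Matrix.one_mul, Matrix.mul_one]
  · intro U hU
    have hLGU : E * A * (Ad * D) * U = U := by
      calc E * A * (Ad * D) * U = E * (A * Ad * (D * U)) := by simp only [Matrix.mul_assoc]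
        _ = U := by
          rw [mul_mul_diagonal_mul_of_mem_phaseCutModFeasible hAAdA hAAdH hb hU,
            ← Matrix.mul_assoc, mul_eq_one_comm.mp hDE, Matrix.one_mul]
    calc E * A * (Ad * D * U * (Ad * D)ᴴ) * (E * A)ᴴ
        = E * A * (Ad * D) * U * (E * A * (Ad * D))ᴴ := by
          simp only [conjTranspose_mul, Matrix.mul_assoc]
      _ = U := mul_mul_conjTranspose_eq_of_mul_eq hLGU hU.1.1

end PhaseRetrieval

theorem phaselift_tight_implies_phasecutmod_tight_general {n p : ℕ}
    (A : Matrix (Fin n) (Fin p) ℂ) (Ad : Matrix (Fin p) (Fin n) ℂ)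
    (hPenrose : A * Ad * A = A ∧ Ad * A * Ad = Ad ∧
      (A * Ad)ᴴ = A * Ad ∧ (Ad * A)ᴴ = Ad * A)
    (hinj : Function.Injective A.mulVec)
    (b : Fin n → ℝ) (hb : ∀ i, b i ≠ 0)
    (hPL : ∃ Xs ∈ phaseLiftFeasible A b,
      Xs.rank = 1 ∧
      (∀ X ∈ phaseLiftFeasible A b, (Matrix.trace Xs).re ≤ (Matrix.trace X).re) ∧
      (∀ X ∈ phaseLiftFeasible A b,
        (∀ Y ∈ phaseLiftFeasible A b, (Matrix.trace X).re ≤ (Matrix.trace Y).re) →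
        X = Xs)) :
    ∃ Us ∈ phaseCutModFeasible A Ad b,
      Us.rank = 1 ∧
      (∀ U ∈ phaseCutModFeasible A Ad b,
        (Matrix.trace ((Matrix.diagonal fun i => (b i : ℂ)) * Adᴴ * Ad *
            (Matrix.diagonal fun i => (b i : ℂ)) * Us)).re ≤
          (Matrix.trace ((Matrix.diagonal fun i => (b i : ℂ)) * Adᴴ * Ad *
            (Matrix.diagonal fun i => (b i : ℂ)) * U)).re) ∧
      (∀ U ∈ phaseCutModFeasible A Ad b,
        (∀ W ∈ phaseCutModFeasible A Ad b,
          (Matrix.trace ((Matrix.diagonal fun i => (b i : ℂ)) * Adᴴ * Ad *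
              (Matrix.diagonal fun i => (b i : ℂ)) * U)).re ≤
            (Matrix.trace ((Matrix.diagonal fun i => (b i : ℂ)) * Adᴴ * Ad *
              (Matrix.diagonal fun i => (b i : ℂ)) * W)).re) →
        U = Us) := by
  obtain ⟨hAAdA, -, hAAdH, -⟩ := hPenrose
  obtain ⟨Xs, hXs, hrank, hmin, huniq⟩ := hPL
  set D : Matrix (Fin n) (Fin n) ℂ := diagonal fun i => (b i : ℂ) with hD
  let Φ : Matrix (Fin n) (Fin n) ℂ → Matrix (Fin p) (Fin p) ℂ :=
    fun U => Ad * D * U * (Ad * D)ᴴ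
  let Ψ : Matrix (Fin p) (Fin p) ℂ → Matrix (Fin n) (Fin n) ℂ :=
    fun X => (diagonal fun i => (b i : ℂ)⁻¹) * A * X * ((diagonal fun i => (b i : ℂ)⁻¹) * A)ᴴ
  have hΦ : Set.MapsTo Φ (phaseCutModFeasible A Ad b) (phaseLiftFeasible A b) :=
    fun _ hU => conj_mem_phaseLiftFeasible hAAdA hAAdH hb hU
  have hΨ : Set.MapsTo Ψ (phaseLiftFeasible A b) (phaseCutModFeasible A Ad b) :=
    fun _ hX => conj_mem_phaseCutModFeasible hAAdA hb hX
  have hinv : Set.InvOn Φ Ψ (phaseLiftFeasible A b) (phaseCutModFeasible A Ad b) :=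
    invOn_conj_phaseLiftFeasible_phaseCutModFeasible hAAdA hAAdH hinj hb
  have hcost : (fun U => (trace (D * Adᴴ * Ad * D * U)).re) = (fun X => (trace X).re) ∘ Φ := by
    ext U
    rw [Function.comp_apply, trace_mul_comm (Ad * D * U), conjTranspose_mul, hD,
      conjTranspose_diagonal_ofReal]
    simp only [Matrix.mul_assoc]
  refine ⟨Ψ Xs, hΨ hXs, ?_, ?_, ?_⟩
  · refine le_antisymm (hrank ▸ rank_mul_mul_le _ _ _) ?_
    calc 1 = (Φ (Ψ Xs)).rank := by rw [hinv.1 hXs, hrank]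
      _ ≤ (Ψ Xs).rank := rank_mul_mul_le _ _ _
  · exact isMinOn_iff.mp (hcost ▸ hinv.isMinOn_comp hΦ hXs (isMinOn_iff.mpr hmin))
  · intro U hU hUmin
    refine hinv.eq_of_isMinOn_comp hΦ hΨ (fun X hX h => huniq X hX (isMinOn_iff.mp h)) hU ?_
    exact hcost ▸ isMinOn_iff.mpr hUmin

/-- Under injectivity of `A`, `bᵢ ≠ 0` and solvability of `|Ax| = b`:
if PhaseLift (minimize `Tr(X)` over its feasible set) has a unique optimal solution and
this solution has rank one, then PhaseCutMod (minimize `Tr(BU)`, with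
`B = diag(b) A†* A† diag(b)`, over its feasible set) has a unique optimal solution and
this solution has rank one. -/
theorem phaselift_tight_implies_phasecutmod_tight {n p : ℕ}
    (A : Matrix (Fin n) (Fin p) ℂ) (Ad : Matrix (Fin p) (Fin n) ℂ)
    (hPenrose : A * Ad * A = A ∧ Ad * A * Ad = Ad ∧
      (A * Ad)ᴴ = A * Ad ∧ (Ad * A)ᴴ = Ad * A)
    (hinj : Function.Injective A.mulVec)
    (b : Fin n → ℝ) (hb : ∀ i, b i ≠ 0)
    (x : Fin p → ℂ) (hx : ∀ i, ‖A.mulVec x i‖ = b i)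
    (hPL : ∃ Xs ∈ phaseLiftFeasible A b,
      Xs.rank = 1 ∧
      (∀ X ∈ phaseLiftFeasible A b, (Matrix.trace Xs).re ≤ (Matrix.trace X).re) ∧
      (∀ X ∈ phaseLiftFeasible A b,
        (∀ Y ∈ phaseLiftFeasible A b, (Matrix.trace X).re ≤ (Matrix.trace Y).re) →
        X = Xs)) :
    ∃ Us ∈ phaseCutModFeasible A Ad b,
      Us.rank = 1 ∧
      (∀ U ∈ phaseCutModFeasible A Ad b,
        (Matrix.trace ((Matrix.diagonal fun i => (b i : ℂ)) * Adᴴ * Ad *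
            (Matrix.diagonal fun i => (b i : ℂ)) * Us)).re ≤
          (Matrix.trace ((Matrix.diagonal fun i => (b i : ℂ)) * Adᴴ * Ad *
            (Matrix.diagonal fun i => (b i : ℂ)) * U)).re) ∧
      (∀ U ∈ phaseCutModFeasible A Ad b,
        (∀ W ∈ phaseCutModFeasible A Ad b,
          (Matrix.trace ((Matrix.diagonal fun i => (b i : ℂ)) * Adᴴ * Ad *
              (Matrix.diagonal fun i => (b i : ℂ)) * U)).re ≤
            (Matrix.trace ((Matrix.diagonal fun i => (b i : ℂ)) * Adᴴ * Ad *
              (Matrix.diagonal fun i => (b i : ℂ)) * W)).re) →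
        U = Us) :=
  phaselift_tight_implies_phasecutmod_tight_general A Ad hPenrose hinj b hb hPL
end

section
/- Let A ∈ ℂ^{n×p}, x₀ ∈ ℂ^p, b_noise ∈ ℝⁿ, and set b = |Ax₀| + b_noise. Let V be a minimizer of d₁(V, F) over {V ∈ H_n : V ⪰ 0, diag(V) = b²}, let P = AA† and V∥ = PVP, and define b_PL ∈ ℝⁿ by (b_PL)_i = √((V∥)_ii) − |Ax₀|_i for i = 1,…,n. Then ‖b_PL‖₂ ≤ 2‖b_noise‖₂. -/
open Matrix ComplexOrder

/-- The Euclidean norm of a real vector. -/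
noncomputable def rvecNorm {n : ℕ} (v : Fin n → ℝ) : ℝ :=
  Real.sqrt (∑ i, (v i) ^ 2)

/-- `F = {V ∈ H_n : (I − AA†)V(I − AA†) = 0}`. -/
def Fset {n p : ℕ} (A : Matrix (Fin n) (Fin p) ℂ) (Ad : Matrix (Fin p) (Fin n) ℂ) :
    Set (Matrix (Fin n) (Fin n) ℂ) :=
  {V | V.IsHermitian ∧ (1 - A * Ad) * V * (1 - A * Ad) = 0}

/-- Trace-norm distance from `V` to `F`. -/
noncomputable def d1F {n p : ℕ} (A : Matrix (Fin n) (Fin p) ℂ)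
    (Ad : Matrix (Fin p) (Fin n) ℂ) (V : Matrix (Fin n) (Fin n) ℂ) : ℝ :=
  sInf {r : ℝ | ∃ W ∈ Fset A Ad, r = traceNorm (V - W)}


/-!
Write `P = AA†`, `Q = 1 - P` and `V = C²` with `C = √V`. The `i`-th column of `C` is the sum of
those of `CP` and `CQ`, whose lengths are `√(PVP)ᵢᵢ` and `cᵢ := √(QVQ)ᵢᵢ`, while its own length
is `|bᵢ|`; so `|(b_PL)ᵢ| ≤ cᵢ + |(b_noise)ᵢ|` and `‖b_PL‖ ≤ ‖c‖ + ‖b_noise‖`.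

It remains to show `‖c‖² ≤ ‖b_noise‖²`. Since `0 ≤ Q ≤ 1` and `tr(WQ) = 0` for `W ∈ F`,
`‖c‖² = tr(VQ)` is a lower bound for `d₁(V, F)`. On the other hand the rank-one competitor `yy*`,
where `y` has moduli `b` and the phases of `Ax₀`, lies at distance at most
`‖Qy‖² = ‖Q(y - Ax₀)‖² ≤ ‖y - Ax₀‖² = ‖b_noise‖²` from `F`, and `V` is a minimizer.
-/

open Polynomial in
lemma Matrix.IsHermitian.sum_comp_eigenvalues_of_charpoly_eq {ι 𝕜 : Type*} [Fintype ι]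
    [DecidableEq ι] [RCLike 𝕜] {H : Matrix ι ι 𝕜} (hH : H.IsHermitian) {ν : ι → ℝ}
    (h : H.charpoly = ∏ i, (X - C (ν i : 𝕜))) (g : ℝ → ℝ) :
    ∑ i, g (hH.eigenvalues i) = ∑ i, g (ν i) := by
  have hroots : Multiset.map ((RCLike.ofReal : ℝ → 𝕜) ∘ hH.eigenvalues) Finset.univ.val =
      Multiset.map ((RCLike.ofReal : ℝ → 𝕜) ∘ ν) Finset.univ.val := by
    rw [← hH.roots_charpoly_eq_eigenvalues, h,
      roots_prod _ _ (by simp [Finset.prod_ne_zero_iff, X_sub_C_ne_zero])]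
    simp
  simpa only [Multiset.map_map, Function.comp_def, RCLike.ofReal_re,
    ← Finset.sum_eq_multiset_sum] using
    congrArg (fun s => (s.map (g ∘ RCLike.re (K := 𝕜))).sum) hroots

lemma traceNorm_nonneg {n : ℕ} (M : Matrix (Fin n) (Fin n) ℂ) : 0 ≤ traceNorm M :=
  Finset.sum_nonneg fun _ _ => Real.sqrt_nonneg _

open Polynomial in
lemma Matrix.IsHermitian.traceNorm_eq_sum_abs_eigenvalues {n : ℕ}
    {M : Matrix (Fin n) (Fin n) ℂ} (hM : M.IsHermitian) :
    traceNorm M = ∑ i, |hM.eigenvalues i| := by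
  have hcharpoly : (Mᴴ * M).charpoly = ∏ i, (X - C ((hM.eigenvalues i ^ 2 : ℝ) : ℂ)) := by
    rw [hM.eq, ← sq, ← cfc_pow_id (R := ℝ) M 2 hM.isSelfAdjoint, hM.charpoly_cfc_eq]
    rfl
  unfold traceNorm
  rw [IsHermitian.sum_comp_eigenvalues_of_charpoly_eq _ hcharpoly Real.sqrt]
  exact Finset.sum_congr rfl fun i _ => Real.sqrt_sq_eq_abs _

lemma Matrix.PosSemidef.traceNorm_eq_re_trace {n : ℕ} {M : Matrix (Fin n) (Fin n) ℂ}
    (hM : M.PosSemidef) : traceNorm M = M.trace.re := by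
  rw [hM.1.traceNorm_eq_sum_abs_eigenvalues, hM.1.trace_eq_sum_eigenvalues, Complex.re_sum]
  simp [abs_of_nonneg (hM.eigenvalues_nonneg _)]

lemma Matrix.PosSemidef.sum_sqrt_re_diag_sq {ι : Type*} [Fintype ι] {M : Matrix ι ι ℂ}
    (hM : M.PosSemidef) : ∑ i, √(M i i).re ^ 2 = M.trace.re := by
  rw [trace, Complex.re_sum]
  exact Finset.sum_congr rfl fun i _ => Real.sq_sqrt (Complex.nonneg_iff.mp hM.diag_nonneg).1

lemma Matrix.IsHermitian.re_trace_mul_le_traceNorm {n : ℕ} {M Q : Matrix (Fin n) (Fin n) ℂ}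
    (hM : M.IsHermitian) (hQ : Q.PosSemidef) (hQ1 : (1 - Q).PosSemidef) :
    (M * Q).trace.re ≤ traceNorm M := by
  set U : Matrix (Fin n) (Fin n) ℂ := (hM.eigenvectorUnitary : Matrix (Fin n) (Fin n) ℂ)
  have hUU : star U * U = 1 := Unitary.coe_star_mul_self hM.eigenvectorUnitary
  set N := star U * Q * U
  have hN : N.PosSemidef := hQ.conjTranspose_mul_mul_same U
  have hN1 : (1 - N).PosSemidef := by
    have h : 1 - N = star U * (1 - Q) * U := by simp [N, mul_sub, sub_mul, hUU]
    rw [h]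
    exact hQ1.conjTranspose_mul_mul_same U
  have htrace : (M * Q).trace = ∑ i, (hM.eigenvalues i : ℂ) * N i i := by
    conv_lhs => rw [hM.spectral_theorem, Unitary.conjStarAlgAut_apply]
    set D := diagonal ((RCLike.ofReal : ℝ → ℂ) ∘ hM.eigenvalues)
    rw [show U * D * star U * Q = U * (D * star U * Q) by simp only [mul_assoc], trace_mul_comm,
      show D * star U * Q * U = D * N by simp only [N, mul_assoc]]
    simp [trace, D]
  rw [htrace, Complex.re_sum, hM.traceNorm_eq_sum_abs_eigenvalues]
  refine Finset.sum_le_sum fun i _ => ?_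
  have h0 : 0 ≤ (N i i).re := (Complex.nonneg_iff.mp hN.diag_nonneg).1
  have h1 : (N i i).re ≤ 1 := by
    simpa using (Complex.nonneg_iff.mp (hN1.diag_nonneg (i := i))).1
  rw [Complex.re_ofReal_mul]
  calc hM.eigenvalues i * (N i i).re ≤ |hM.eigenvalues i| * (N i i).re :=
        mul_le_mul_of_nonneg_right (le_abs_self _) h0
    _ ≤ |hM.eigenvalues i| := mul_le_of_le_one_right (abs_nonneg _) h1

lemma traceNorm_vecMulVec_self_star {n : ℕ} (v : Fin n → ℂ) :
    traceNorm (vecMulVec v (star v)) = ‖(WithLp.toLp 2 v : EuclideanSpace ℂ (Fin n))‖ ^ 2 := by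
  rw [(posSemidef_vecMulVec_self_star v).traceNorm_eq_re_trace, trace_vecMulVec,
    EuclideanSpace.norm_sq_eq]
  simp [dotProduct, Complex.mul_conj', ← Complex.ofReal_pow]

open scoped MatrixOrder in
lemma IsStarProjection.posSemidef {ι 𝕜 : Type*} [Fintype ι] [RCLike 𝕜] {Q : Matrix ι ι 𝕜}
    (hQ : IsStarProjection Q) : Q.PosSemidef :=
  Matrix.nonneg_iff_posSemidef.mp hQ.nonneg

lemma IsStarProjection.norm_mulVec_le {ι 𝕜 : Type*} [Fintype ι] [DecidableEq ι] [RCLike 𝕜]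
    {Q : Matrix ι ι 𝕜} (hQ : IsStarProjection Q) (w : ι → 𝕜) :
    ‖(WithLp.toLp 2 (Q *ᵥ w) : EuclideanSpace 𝕜 ι)‖ ≤ ‖(WithLp.toLp 2 w : EuclideanSpace 𝕜 ι)‖ := by
  set T := toEuclideanCLM (n := ι) (𝕜 := 𝕜) Q
  calc ‖(WithLp.toLp 2 (Q *ᵥ w) : EuclideanSpace 𝕜 ι)‖ = ‖T (WithLp.toLp 2 w)‖ := rfl
    _ ≤ ‖T‖ * ‖(WithLp.toLp 2 w : EuclideanSpace 𝕜 ι)‖ := T.le_opNorm _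
    _ ≤ ‖(WithLp.toLp 2 w : EuclideanSpace 𝕜 ι)‖ :=
      mul_le_of_le_one_left (norm_nonneg _) ((hQ.map _).norm_le T)

lemma re_diag_conjTranspose_mul_self {ι κ 𝕜 : Type*} [Fintype ι] [RCLike 𝕜]
    (X : Matrix ι κ 𝕜) (i : κ) :
    RCLike.re ((Xᴴ * X) i i) = ‖(WithLp.toLp 2 fun k => X k i : EuclideanSpace 𝕜 ι)‖ ^ 2 := by
  simp only [EuclideanSpace.norm_sq_eq, mul_apply, conjTranspose_apply, RCLike.star_def,
    RCLike.conj_mul, map_sum, ← RCLike.ofReal_pow, RCLike.ofReal_re]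

open scoped MatrixOrder in
lemma Matrix.PosSemidef.abs_sqrt_re_diag_compression_sub_le {ι 𝕜 : Type*} [Fintype ι]
    [DecidableEq ι] [RCLike 𝕜] {V P : Matrix ι ι 𝕜} (hV : V.PosSemidef) (hP : P.IsHermitian)
    (i : ι) :
    |√(RCLike.re ((P * V * P) i i)) - √(RCLike.re (V i i))| ≤
      √(RCLike.re (((1 - P) * V * (1 - P)) i i)) := by
  set C := CFC.sqrt V
  have hCC : C * C = V := CFC.sqrt_mul_sqrt_self V hV.nonneg
  have hC : C.IsHermitian := (CFC.sqrt_nonneg V).posSemidef.1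
  let col (X : Matrix ι ι 𝕜) : EuclideanSpace 𝕜 ι := WithLp.toLp 2 fun k => X k i
  have hsqrt (R : Matrix ι ι 𝕜) (hR : R.IsHermitian) :
      √(RCLike.re ((R * V * R) i i)) = ‖col (C * R)‖ := by
    rw [show R * V * R = (C * R)ᴴ * (C * R) by
        rw [conjTranspose_mul, hR.eq, hC.eq, ← hCC]; simp only [mul_assoc],
      re_diag_conjTranspose_mul_self, Real.sqrt_sq (norm_nonneg _)]
  have hcol : col (C * P) + col (C * (1 - P)) = col C := by
    ext k; simp [col, mul_sub]
  rw [hsqrt P hP, hsqrt (1 - P) (isHermitian_one.sub hP),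
    show V = 1 * V * 1 by simp, hsqrt 1 isHermitian_one, mul_one, ← hcol]
  simpa using abs_norm_sub_norm_le (col (C * P)) (col (C * P) + col (C * (1 - P)))

section Distance

variable {n p : ℕ} {A : Matrix (Fin n) (Fin p) ℂ} {Ad : Matrix (Fin p) (Fin n) ℂ}
  {V : Matrix (Fin n) (Fin n) ℂ}

lemma re_trace_compression_le_d1F (hP : IsStarProjection (A * Ad)) (hV : V.IsHermitian) :
    ((1 - A * Ad) * V * (1 - A * Ad)).trace.re ≤ d1F A Ad V := by
  set Q := 1 - A * Ad
  have hQ : IsStarProjection Q := hP.one_sub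
  have hcycle (X : Matrix (Fin n) (Fin n) ℂ) : (Q * X * Q).trace = (X * Q).trace := by
    rw [mul_assoc, trace_mul_comm, mul_assoc, hQ.isIdempotentElem.eq]
  refine le_csInf ⟨_, 0, ⟨isHermitian_zero, by simp⟩, rfl⟩ ?_
  rintro _ ⟨W, ⟨hW, hQWQ⟩, rfl⟩
  calc (Q * V * Q).trace.re = ((V - W) * Q).trace.re := by
        rw [hcycle, sub_mul, trace_sub, ← hcycle W, hQWQ, trace_zero, sub_zero]
    _ ≤ traceNorm (V - W) :=
      (hV.sub hW).re_trace_mul_le_traceNorm hQ.posSemidef (by simpa [Q] using hP.posSemidef)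

lemma d1F_le_traceNorm_compression (hP : IsStarProjection (A * Ad)) (hV : V.IsHermitian) :
    d1F A Ad V ≤ traceNorm ((1 - A * Ad) * V * (1 - A * Ad)) := by
  set Q := 1 - A * Ad
  have hQ : IsStarProjection Q := hP.one_sub
  have hQh : Q.IsHermitian := hQ.isSelfAdjoint
  refine csInf_le ⟨0, ?_⟩ ⟨V - Q * V * Q, ⟨?_, ?_⟩, by rw [sub_sub_cancel]⟩
  · rintro _ ⟨W, -, rfl⟩
    exact traceNorm_nonneg _
  · exact hV.sub (by simpa [hQh.eq] using isHermitian_conjTranspose_mul_mul Q hV)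
  · have hcompress (R : Matrix (Fin n) (Fin n) ℂ) (hR : R * R = R) :
        R * (V - R * V * R) * R = 0 := by
      rw [mul_sub, sub_mul, show R * (R * V * R) * R = R * R * V * (R * R) by
        simp only [mul_assoc], hR, sub_self]
    exact hcompress Q hQ.isIdempotentElem.eq

end Distance

/-- Since `Complex.arg 0 = 0`, the phase is `1` where `z i = 0`: every entry has modulus `|b i|`. -/
noncomputable def phaseAligned {ι : Type*} (b : ι → ℝ) (z : ι → ℂ) : ι → ℂ :=
  fun i => b i * Complex.exp (Complex.arg (z i) * Complex.I)

lemma norm_phaseAligned_apply {ι : Type*} (b : ι → ℝ) (z : ι → ℂ) (i : ι) :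
    ‖phaseAligned b z i‖ = |b i| := by
  simp [phaseAligned, Complex.norm_exp_ofReal_mul_I]

lemma vecMulVec_phaseAligned_apply_self {ι : Type*} (b : ι → ℝ) (z : ι → ℂ) (i : ι) :
    vecMulVec (phaseAligned b z) (star (phaseAligned b z)) i i = (b i : ℂ) ^ 2 := by
  rw [vecMulVec_apply, Pi.star_apply, RCLike.star_def, Complex.mul_conj',
    norm_phaseAligned_apply, ← Complex.ofReal_pow, sq_abs, Complex.ofReal_pow]

lemma norm_phaseAligned_sub_apply {ι : Type*} (b : ι → ℝ) (z : ι → ℂ) (i : ι) :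
    ‖phaseAligned b z i - z i‖ = |b i - ‖z i‖| := by
  have h : phaseAligned b z i - z i =
      (b i - ‖z i‖ : ℝ) * Complex.exp (Complex.arg (z i) * Complex.I) := by
    rw [phaseAligned, Complex.ofReal_sub, sub_mul, Complex.norm_mul_exp_arg_mul_I]
  rw [h, norm_mul, Complex.norm_real, Complex.norm_exp_ofReal_mul_I, mul_one, Real.norm_eq_abs]

lemma d1F_vecMulVec_phaseAligned_le {n p : ℕ} {A : Matrix (Fin n) (Fin p) ℂ}
    {Ad : Matrix (Fin p) (Fin n) ℂ} (hP : IsStarProjection (A * Ad)) (b : Fin n → ℝ)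
    {z : Fin n → ℂ} (hz : (1 - A * Ad) *ᵥ z = 0) :
    d1F A Ad (vecMulVec (phaseAligned b z) (star (phaseAligned b z))) ≤
      ∑ i, (b i - ‖z i‖) ^ 2 := by
  set Q := 1 - A * Ad
  set y := phaseAligned b z
  have hQ : IsStarProjection Q := hP.one_sub
  have hQy : Q *ᵥ y = Q *ᵥ (y - z) := by rw [mulVec_sub, hz, sub_zero]
  calc d1F A Ad (vecMulVec y (star y))
      ≤ traceNorm (Q * vecMulVec y (star y) * Q) :=
        d1F_le_traceNorm_compression hP (posSemidef_vecMulVec_self_star y).1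
    _ = ‖(WithLp.toLp 2 (Q *ᵥ (y - z)) : EuclideanSpace ℂ (Fin n))‖ ^ 2 := by
        rw [mul_vecMulVec, vecMulVec_mul, ← hQy, ← traceNorm_vecMulVec_self_star]
        congr 2
        rw [star_mulVec, IsHermitian.eq hQ.isSelfAdjoint]
    _ ≤ ‖(WithLp.toLp 2 (y - z) : EuclideanSpace ℂ (Fin n))‖ ^ 2 := by
        gcongr
        exact hQ.norm_mulVec_le _
    _ = ∑ i, (b i - ‖z i‖) ^ 2 := by
        simp [EuclideanSpace.norm_sq_eq, y, norm_phaseAligned_sub_apply]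

lemma abs_sub_le_of_abs_sub_abs_add_le {s a e c : ℝ} (ha : 0 ≤ a) (h : |s - (|a + e|)| ≤ c) :
    |s - a| ≤ c + |e| :=
  calc |s - a| ≤ |s - (|a + e|)| + |(|a + e|) - a| := abs_sub_le _ _ _
    _ ≤ c + |e| :=
      add_le_add h (by simpa [abs_of_nonneg ha] using abs_abs_sub_abs_le_abs_sub (a + e) a)

lemma rvecNorm_le_two_mul_of_abs_le_add {n : ℕ} {v c e : Fin n → ℝ}
    (h : ∀ i, |v i| ≤ c i + |e i|) (hc : rvecNorm c ≤ rvecNorm e) :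
    rvecNorm v ≤ 2 * rvecNorm e := by
  have hmono : rvecNorm v ≤ rvecNorm (c + fun i => |e i|) :=
    Real.sqrt_le_sqrt <| Finset.sum_le_sum fun i _ =>
      sq_le_sq' (abs_le.mp (h i)).1 (abs_le.mp (h i)).2
  have habs : rvecNorm (fun i => |e i|) = rvecNorm e := by simp [rvecNorm]
  have htriangle := norm_add_le (WithLp.toLp 2 c : EuclideanSpace ℝ (Fin n))
    (WithLp.toLp 2 fun i => |e i|)
  simp only [← WithLp.toLp_add, EuclideanSpace.norm_eq, Real.norm_eq_abs, sq_abs] at htriangle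
  simp only [rvecNorm] at hmono habs hc ⊢
  linarith

lemma isStarProjection_mul_of_mul_mul_eq {m n α : Type*} [Fintype m] [Fintype n]
    [NonUnitalSemiring α] [StarRing α] {A : Matrix m n α} {Ad : Matrix n m α}
    (hA : A * Ad * A = A) (hP : (A * Ad)ᴴ = A * Ad) :
    IsStarProjection (A * Ad) :=
  ⟨by simp only [IsIdempotentElem, ← Matrix.mul_assoc, hA], hP⟩

/-- Let `b = |Ax₀| + b_noise` and let `V` minimize `d₁(·, F)` over
`{V ⪰ 0 : diag(V) = b²}`. With `V∥ = PVP`, `P = AA†`, define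
`(b_PL)ᵢ = √((V∥)ᵢᵢ) − |Ax₀|ᵢ`. Then `‖b_PL‖₂ ≤ 2‖b_noise‖₂`. -/
theorem ecart_b {n p : ℕ}
    (A : Matrix (Fin n) (Fin p) ℂ) (Ad : Matrix (Fin p) (Fin n) ℂ)
    (hPenrose : A * Ad * A = A ∧ Ad * A * Ad = Ad ∧
      (A * Ad)ᴴ = A * Ad ∧ (Ad * A)ᴴ = Ad * A)
    (x₀ : Fin p → ℂ) (bnoise : Fin n → ℝ)
    (b : Fin n → ℝ) (hb : b = fun i => ‖A.mulVec x₀ i‖ + bnoise i)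
    (V : Matrix (Fin n) (Fin n) ℂ)
    (hVpsd : V.PosSemidef) (hVdiag : ∀ i, V i i = ((b i : ℂ)) ^ 2)
    (hVmin : ∀ V' : Matrix (Fin n) (Fin n) ℂ, V'.PosSemidef →
      (∀ i, V' i i = ((b i : ℂ)) ^ 2) → d1F A Ad V ≤ d1F A Ad V')
    (bPL : Fin n → ℝ)
    (hbPL : bPL = fun i =>
      Real.sqrt ((((A * Ad) * V * (A * Ad)) i i).re) - ‖A.mulVec x₀ i‖) :
    rvecNorm bPL ≤ 2 * rvecNorm bnoise := by
  obtain ⟨hAAdA, -, hPherm, -⟩ := hPenrose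
  have hP : IsStarProjection (A * Ad) := isStarProjection_mul_of_mul_mul_eq hAAdA hPherm
  set z := A *ᵥ x₀
  set Q := 1 - A * Ad
  have hpoint (i : Fin n) : |bPL i| ≤ √((Q * V * Q) i i).re + |bnoise i| := by
    have hVi : √(V i i).re = |‖z i‖ + bnoise i| := by
      rw [hVdiag, hb, ← Complex.ofReal_pow, Complex.ofReal_re, Real.sqrt_sq_eq_abs]
    have hdiag := hVpsd.abs_sqrt_re_diag_compression_sub_le hPherm i
    simp only [RCLike.re_to_complex, hVi] at hdiag
    rw [hbPL]
    exact abs_sub_le_of_abs_sub_abs_add_le (norm_nonneg (z i)) hdiag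
  have hQz : Q *ᵥ z = 0 := by
    rw [mulVec_mulVec, Matrix.sub_mul, Matrix.one_mul, hAAdA, sub_self, zero_mulVec]
  have hQh : Qᴴ = Q := IsHermitian.eq hP.one_sub.isSelfAdjoint
  have hQVQ : (Q * V * Q).PosSemidef := by
    simpa only [hQh] using hVpsd.conjTranspose_mul_mul_same Q
  refine rvecNorm_le_two_mul_of_abs_le_add hpoint (Real.sqrt_le_sqrt ?_)
  calc ∑ i, √((Q * V * Q) i i).re ^ 2 = (Q * V * Q).trace.re := hQVQ.sum_sqrt_re_diag_sq
    _ ≤ d1F A Ad V := re_trace_compression_le_d1F hP hVpsd.1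
    _ ≤ d1F A Ad (vecMulVec (phaseAligned b z) (star (phaseAligned b z))) :=
      hVmin _ (posSemidef_vecMulVec_self_star _) (vecMulVec_phaseAligned_apply_self b z)
    _ ≤ ∑ i, (b i - ‖z i‖) ^ 2 := d1F_vecMulVec_phaseAligned_le hP b hQz
    _ = ∑ i, bnoise i ^ 2 := by simp [hb]
end

section
/- Let P ∈ ℂ^{n×n} be an orthogonal projection (P = P* = P²), Q = I − P, and let V ∈ H_n with V ⪰ 0. Then ‖V − PVP‖₂ ≤ √2·√(Tr(PVP))·√(Tr(QVQ)) + Tr(QVQ), where ‖·‖₂ is the Frobenius norm. -/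
open Matrix ComplexOrder

/-- The Frobenius norm of a complex matrix. -/
noncomputable def frobNorm {n : ℕ} (M : Matrix (Fin n) (Fin n) ℂ) : ℝ :=
  Real.sqrt (∑ i, ∑ j, ‖M i j‖ ^ 2)

/-!
Write `V = BᴴB` and `Q = 1 - P`. Then `V - PVP = X + Xᴴ + QVQ` with `X = PVQ = (BP)ᴴ(BQ)`.
Since `X² = PV(QP)VQ = 0`, the cross terms of `‖X + Xᴴ‖²` vanish and `‖X + Xᴴ‖ = √2‖X‖`.
Submultiplicativity of the Frobenius norm gives `‖X‖ ≤ ‖BP‖‖BQ‖` and `‖QVQ‖ ≤ ‖BQ‖²`,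
while `Tr(PVP) = ‖BP‖²` and `Tr(QVQ) = ‖BQ‖²`.
-/

attribute [local instance] Matrix.frobeniusSeminormedAddCommGroup

namespace Matrix

variable {l m n 𝕜 : Type*} [Fintype m] [Fintype n] [RCLike 𝕜]

lemma frobenius_norm_eq_sqrt {α : Type*} [SeminormedAddCommGroup α] (A : Matrix m n α) :
    ‖A‖ = √(∑ i, ∑ j, ‖A i j‖ ^ 2) := by
  simp only [frobenius_norm_def, Real.sqrt_eq_rpow, Real.rpow_two]

lemma frobenius_norm_sq_eq_re_trace (A : Matrix m n 𝕜) :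
    ‖A‖ ^ 2 = RCLike.re (Aᴴ * A).trace := by
  rw [frobenius_norm_eq_sqrt, Real.sq_sqrt (by positivity), trace, Finset.sum_comm]
  simp only [diag_apply, mul_apply, conjTranspose_apply, RCLike.star_def, RCLike.conj_mul,
    map_sum]
  norm_cast

lemma frobenius_norm_conjTranspose_mul_le [Fintype l] (A : Matrix l m 𝕜) (B : Matrix l n 𝕜) :
    ‖Aᴴ * B‖ ≤ ‖A‖ * ‖B‖ :=
  (frobenius_norm_mul _ _).trans_eq (by rw [frobenius_norm_conjTranspose])

lemma frobenius_norm_add_conjTranspose_of_mul_self_eq_zero {X : Matrix n n 𝕜}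
    (hX : X * X = 0) : ‖X + Xᴴ‖ = √2 * ‖X‖ := by
  have hXX : Xᴴ * Xᴴ = 0 := by rw [← conjTranspose_mul, hX, conjTranspose_zero]
  have hsq : ‖X + Xᴴ‖ ^ 2 = 2 * ‖X‖ ^ 2 := by
    simp only [frobenius_norm_sq_eq_re_trace, conjTranspose_add, conjTranspose_conjTranspose,
      add_mul, mul_add, hX, hXX, trace_add, trace_mul_comm X Xᴴ, map_add, trace_zero, map_zero]
    ring
  rw [← Real.sqrt_sq (norm_nonneg (X + Xᴴ)), hsq, Real.sqrt_mul zero_le_two,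
    Real.sqrt_sq (norm_nonneg X)]

open scoped MatrixOrder in
lemma PosSemidef.exists_eq_conjTranspose_mul_self [DecidableEq n] {A : Matrix n n 𝕜}
    (hA : A.PosSemidef) : ∃ B : Matrix n n 𝕜, A = Bᴴ * B :=
  ⟨CFC.sqrt A, by rw [(CFC.sqrt_nonneg A).posSemidef.1.eq, CFC.sqrt_mul_sqrt_self A hA.nonneg]⟩

lemma mul_conjTranspose_mul_self_mul {P : Matrix n n 𝕜} (hP : Pᴴ = P) (B : Matrix m n 𝕜)
    (R : Matrix n l 𝕜) :
    P * (Bᴴ * B) * R = (B * P)ᴴ * (B * R) := by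
  simp only [conjTranspose_mul, hP, Matrix.mul_assoc]

lemma re_trace_mul_conjTranspose_mul_self_mul {P : Matrix n n 𝕜} (hP : Pᴴ = P)
    (B : Matrix m n 𝕜) :
    RCLike.re (P * (Bᴴ * B) * P).trace = ‖B * P‖ ^ 2 := by
  rw [mul_conjTranspose_mul_self_mul hP, frobenius_norm_sq_eq_re_trace]

section Projection

variable [DecidableEq n] {P : Matrix n n 𝕜}

lemma frobenius_norm_sub_conj_le (hP1 : Pᴴ = P) (hP2 : P * P = P) {V : Matrix n n 𝕜}
    (hV : Vᴴ = V) :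
    ‖V - P * V * P‖ ≤ √2 * ‖P * V * (1 - P)‖ + ‖(1 - P) * V * (1 - P)‖ := by
  set Q := 1 - P
  have hQP : Q * P = 0 := by simp [Q, sub_mul, hP2]
  set X := P * V * Q
  have hX : X * X = 0 := by
    rw [show X * X = P * V * (Q * P) * V * Q by simp only [X, Matrix.mul_assoc], hQP]
    simp only [mul_zero, zero_mul]
  have hsplit : V - P * V * P = X + Xᴴ + Q * V * Q := by
    simp only [X, Q, conjTranspose_mul, conjTranspose_sub, conjTranspose_one, hP1, hV]
    noncomm_ring
  rw [hsplit, ← frobenius_norm_add_conjTranspose_of_mul_self_eq_zero hX]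
  exact norm_add_le _ _

lemma frobenius_norm_conjTranspose_mul_self_sub_le (hP1 : Pᴴ = P) (hP2 : P * P = P)
    (B : Matrix m n 𝕜) :
    ‖Bᴴ * B - P * (Bᴴ * B) * P‖ ≤ √2 * ‖B * P‖ * ‖B * (1 - P)‖ + ‖B * (1 - P)‖ ^ 2 := by
  have hQ : (1 - P)ᴴ = 1 - P := by simp [hP1]
  calc ‖Bᴴ * B - P * (Bᴴ * B) * P‖
      ≤ √2 * ‖P * (Bᴴ * B) * (1 - P)‖ + ‖(1 - P) * (Bᴴ * B) * (1 - P)‖ :=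
        frobenius_norm_sub_conj_le hP1 hP2 (by simp)
    _ ≤ √2 * (‖B * P‖ * ‖B * (1 - P)‖) + ‖B * (1 - P)‖ * ‖B * (1 - P)‖ := by
      rw [mul_conjTranspose_mul_self_mul hP1, mul_conjTranspose_mul_self_mul hQ]
      gcongr <;> exact frobenius_norm_conjTranspose_mul_le _ _
    _ = √2 * ‖B * P‖ * ‖B * (1 - P)‖ + ‖B * (1 - P)‖ ^ 2 := by ring

end Projection

end Matrix

lemma frobNorm_eq_norm {n : ℕ} (M : Matrix (Fin n) (Fin n) ℂ) : frobNorm M = ‖M‖ :=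
  (frobenius_norm_eq_sqrt M).symm

/-- For an orthogonal projection `P` (`P = P* = P²`), `Q = I − P`, and
`V ⪰ 0`: `‖V − PVP‖₂ ≤ √2·√(Tr(PVP))·√(Tr(QVQ)) + Tr(QVQ)` (Frobenius norm). -/
theorem frobNorm_sub_proj_le {n : ℕ}
    (P : Matrix (Fin n) (Fin n) ℂ) (hP1 : Pᴴ = P) (hP2 : P * P = P)
    (V : Matrix (Fin n) (Fin n) ℂ) (hV : V.PosSemidef) :
    frobNorm (V - P * V * P) ≤
      Real.sqrt 2 * Real.sqrt ((Matrix.trace (P * V * P)).re) *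
          Real.sqrt ((Matrix.trace ((1 - P) * V * (1 - P))).re) +
        (Matrix.trace ((1 - P) * V * (1 - P))).re := by
  obtain ⟨B, rfl⟩ := hV.exists_eq_conjTranspose_mul_self
  have hQ : (1 - P)ᴴ = 1 - P := by simp [hP1]
  simp only [← RCLike.re_to_complex]
  rw [frobNorm_eq_norm, re_trace_mul_conjTranspose_mul_self_mul hP1,
    re_trace_mul_conjTranspose_mul_self_mul hQ, Real.sqrt_sq (norm_nonneg _),
    Real.sqrt_sq (norm_nonneg _)]
  exact frobenius_norm_conjTranspose_mul_self_sub_le hP1 hP2 B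
end

section
/- Let A ∈ ℂ^{n×p} with rows a_i* for i = 1,…,n, b ∈ ℝⁿ, and suppose there exists c ∈ ℝⁿ such that Σ_{i=1}^n c_i a_i a_i* = I_p. Then every X ∈ H_p with X ⪰ 0 and Tr(a_i a_i* X) = b_i² for all i satisfies Tr(X) = Σ_{i=1}^n c_i b_i². In particular, the trace is constant on the feasible set of PhaseLift, so trace minimization is redundant and PhaseLift is equivalent to the feasibility problem Weak PhaseLift. -/
open Matrix ComplexOrder

theorem Matrix.trace_eq_sum_mul_trace_mul_of_sum_smul_eq_one {ι m R : Type*} [Fintype ι]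
    [Fintype m] [DecidableEq m] [Semiring R] {M : ι → Matrix m m R} {c : ι → R}
    (hc : ∑ i, c i • M i = 1) (X : Matrix m m R) :
    X.trace = ∑ i, c i * (M i * X).trace := by
  calc X.trace = ((∑ i, c i • M i) * X).trace := by rw [hc, one_mul]
    _ = ∑ i, c i * (M i * X).trace := by
      simp only [Finset.sum_mul, trace_sum, smul_mul, trace_smul, smul_eq_mul]

/-- If `Σᵢ cᵢ aᵢaᵢ* = I` for some real coefficients `cᵢ` (where `aᵢ*`
is the `i`-th row of `A`), then every PhaseLift-feasible `X` (i.e. `X ⪰ 0` with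
`Tr(aᵢaᵢ*X) = bᵢ²` for all `i`) satisfies `Tr(X) = Σᵢ cᵢ bᵢ²`: the trace is constant
on the feasible set and trace minimization is redundant. -/
theorem trace_constant_on_phaselift_feasible {n p : ℕ}
    (A : Matrix (Fin n) (Fin p) ℂ) (b : Fin n → ℝ) (c : Fin n → ℝ)
    (hc : ∑ i, (c i : ℂ) • Matrix.vecMulVec (star (A i)) (A i) =
      (1 : Matrix (Fin p) (Fin p) ℂ)) :
    ∀ X : Matrix (Fin p) (Fin p) ℂ, X.PosSemidef →
      (∀ i, Matrix.trace (Matrix.vecMulVec (star (A i)) (A i) * X) = ((b i : ℂ)) ^ 2) →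
      Matrix.trace X = ((∑ i, c i * (b i) ^ 2 : ℝ) : ℂ) := by
  intro X _ hfeasible
  rw [trace_eq_sum_mul_trace_mul_of_sum_smul_eq_one hc X]
  push_cast
  simp only [hfeasible]
end

section
/- Let A ∈ ℂ^{n×p} and b ∈ ℝⁿ with b_i ≠ 0 for all i, and let M = diag(b)(I − AA†)diag(b). The map U ↦ V = diag(b) U diag(b) is a bijection from {U ∈ H_n : U ⪰ 0, diag(U) = 1} onto {V ∈ H_n : V ⪰ 0, diag(V) = b²}, and it satisfies Tr(UM) = Tr(V(I − AA†)). Consequently, the PhaseCut problem (minimize Tr(UM) subject to U ⪰ 0, diag(U) = 1) and the scaled problem (minimize Tr(V(I − AA†)) subject to V ⪰ 0, diag(V) = b²) have the same optimal value, and this bijection maps optimal solutions to optimal solutions. -/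
/-!
Conjugation by the real diagonal matrix `D = diag(b)` preserves positive semidefiniteness,
multiplies the diagonal by `b²`, and is undone by conjugation with `diag(b⁻¹)`; by cyclicity of
the trace, `Tr(U · DXD) = Tr(DUD · X)`. So the scaled problem is the PhaseCut problem transported
along a bijection of feasible sets that preserves the objective, whence equal optimal values and
corresponding optimizers.
-/

open Matrix ComplexOrder

namespace Set

variable {α β γ : Type*} {φ : α → β} {s : Set α} {t : Set β} {f : α → γ} {g : β → γ}

theorem BijOn.image_eq_image_of_eqOn_comp (h : BijOn φ s t) (hfg : EqOn f (g ∘ φ) s) :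
    f '' s = g '' t := by
  rw [← h.image_eq, image_image]
  exact image_congr hfg

theorem BijOn.isMinOn_of_eqOn_comp [Preorder γ] (h : BijOn φ s t) (hfg : EqOn f (g ∘ φ) s)
    {x : α} (hx : x ∈ s) (hmin : IsMinOn f s x) : IsMinOn g t (φ x) := by
  intro z hz
  obtain ⟨y, hy, rfl⟩ := h.surjOn hz
  exact (hfg hx).symm.trans_le ((hmin hy).trans_eq (hfg hy))

end Set

namespace Matrix

variable {ι R : Type*} [Fintype ι]

theorem trace_mul_sandwich [CommSemiring R] (U D X E : Matrix ι ι R) :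
    trace (U * (D * X * E)) = trace (E * U * D * X) := by
  rw [← Matrix.mul_assoc, trace_mul_comm]
  simp only [Matrix.mul_assoc]

variable [DecidableEq ι]

def diagonalScale (b : ι → ℝ) (U : Matrix ι ι ℂ) : Matrix ι ι ℂ :=
  diagonal (fun i => (b i : ℂ)) * U * diagonal (fun i => (b i : ℂ))

theorem diagonalScale_apply_self (b : ι → ℝ) (U : Matrix ι ι ℂ) (i : ι) :
    diagonalScale b U i i = (b i : ℂ) ^ 2 * U i i := by
  simp only [diagonalScale, mul_diagonal, diagonal_mul]
  ring

theorem diagonalScale_diagonalScale (b c : ι → ℝ) (U : Matrix ι ι ℂ) :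
    diagonalScale b (diagonalScale c U) = diagonalScale (b * c) U := by
  simp only [diagonalScale, Matrix.mul_assoc, diagonal_mul_diagonal]
  simp only [← Matrix.mul_assoc, diagonal_mul_diagonal, Pi.mul_apply, Complex.ofReal_mul,
    mul_comm (c _ : ℂ)]

theorem diagonalScale_diagonalScale_of_mul_eq_one {b c : ι → ℝ} (h : b * c = 1)
    (U : Matrix ι ι ℂ) :
    diagonalScale b (diagonalScale c U) = U := by
  rw [diagonalScale_diagonalScale, h]
  simp [diagonalScale]

theorem PosSemidef.diagonalScale {U : Matrix ι ι ℂ} (hU : U.PosSemidef) (b : ι → ℝ) :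
    (diagonalScale b U).PosSemidef := by
  have hstar : star (fun i => (b i : ℂ)) = fun i => (b i : ℂ) :=
    funext fun i => Complex.conj_ofReal (b i)
  unfold Matrix.diagonalScale
  simpa only [diagonal_conjTranspose, hstar] using
    hU.mul_mul_conjTranspose_same (diagonal fun i => (b i : ℂ))

theorem trace_mul_diagonalScale (b : ι → ℝ) (U X : Matrix ι ι ℂ) :
    trace (U * diagonalScale b X) = trace (diagonalScale b U * X) :=
  trace_mul_sandwich ..

def posSemidefWithDiag (a : ι → ℂ) : Set (Matrix ι ι ℂ) :=
  {U | U.PosSemidef ∧ ∀ i, U i i = a i}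

theorem mapsTo_diagonalScale (b : ι → ℝ) {a a' : ι → ℂ} (h : ∀ i, (b i : ℂ) ^ 2 * a i = a' i) :
    Set.MapsTo (diagonalScale b) (posSemidefWithDiag a) (posSemidefWithDiag a') := by
  rintro U ⟨hU, hdiag⟩
  exact ⟨hU.diagonalScale b, fun i => by rw [diagonalScale_apply_self, hdiag, h]⟩

theorem bijOn_diagonalScale {b : ι → ℝ} (hb : ∀ i, b i ≠ 0) {a a' : ι → ℂ}
    (h : ∀ i, (b i : ℂ) ^ 2 * a i = a' i) :
    Set.BijOn (diagonalScale b) (posSemidefWithDiag a) (posSemidefWithDiag a') := by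
  have hinv : b⁻¹ * b = 1 := funext fun i => inv_mul_cancel₀ (hb i)
  refine Set.InvOn.bijOn ⟨fun U _ => diagonalScale_diagonalScale_of_mul_eq_one hinv U,
    fun V _ => diagonalScale_diagonalScale_of_mul_eq_one (mul_comm b _ ▸ hinv) V⟩
    (mapsTo_diagonalScale b h) (mapsTo_diagonalScale b⁻¹ fun i => ?_)
  rw [← h, Pi.inv_apply, Complex.ofReal_inv, ← mul_assoc, ← mul_pow,
    inv_mul_cancel₀ (Complex.ofReal_ne_zero.mpr (hb i)), one_pow, one_mul]

end Matrix

theorem phaseCut_scaling_bijection_general {n p : ℕ}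
    (A : Matrix (Fin n) (Fin p) ℂ) (Ad : Matrix (Fin p) (Fin n) ℂ)
    (b : Fin n → ℝ) (hb : ∀ i, b i ≠ 0)
    (M : Matrix (Fin n) (Fin n) ℂ)
    (hM : M = (Matrix.diagonal fun i => (b i : ℂ)) * (1 - A * Ad) *
      (Matrix.diagonal fun i => (b i : ℂ))) :
    Set.BijOn
      (fun U : Matrix (Fin n) (Fin n) ℂ =>
        (Matrix.diagonal fun i => (b i : ℂ)) * U * (Matrix.diagonal fun i => (b i : ℂ)))
      {U : Matrix (Fin n) (Fin n) ℂ | U.PosSemidef ∧ ∀ i, U i i = 1}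
      {V : Matrix (Fin n) (Fin n) ℂ | V.PosSemidef ∧ ∀ i, V i i = ((b i : ℂ)) ^ 2} ∧
    (∀ U : Matrix (Fin n) (Fin n) ℂ, U.PosSemidef → (∀ i, U i i = 1) →
      Matrix.trace (U * M) =
        Matrix.trace (((Matrix.diagonal fun i => (b i : ℂ)) * U *
          (Matrix.diagonal fun i => (b i : ℂ))) * (1 - A * Ad))) ∧
    sInf {r : ℝ | ∃ U : Matrix (Fin n) (Fin n) ℂ, U.PosSemidef ∧ (∀ i, U i i = 1) ∧
        r = (Matrix.trace (U * M)).re} =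
      sInf {r : ℝ | ∃ V : Matrix (Fin n) (Fin n) ℂ, V.PosSemidef ∧
        (∀ i, V i i = ((b i : ℂ)) ^ 2) ∧
        r = (Matrix.trace (V * (1 - A * Ad))).re} ∧
    (∀ U : Matrix (Fin n) (Fin n) ℂ, U.PosSemidef → (∀ i, U i i = 1) →
      (∀ U' : Matrix (Fin n) (Fin n) ℂ, U'.PosSemidef → (∀ i, U' i i = 1) →
        (Matrix.trace (U * M)).re ≤ (Matrix.trace (U' * M)).re) →
      ∀ V' : Matrix (Fin n) (Fin n) ℂ, V'.PosSemidef → (∀ i, V' i i = ((b i : ℂ)) ^ 2) →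
        (Matrix.trace (((Matrix.diagonal fun i => (b i : ℂ)) * U *
          (Matrix.diagonal fun i => (b i : ℂ))) * (1 - A * Ad))).re ≤
          (Matrix.trace (V' * (1 - A * Ad))).re) := by
  have hbij := bijOn_diagonalScale hb (a := 1) (a' := fun i => (b i : ℂ) ^ 2) fun _ => mul_one _
  have htrace (U : Matrix (Fin n) (Fin n) ℂ) :
      trace (U * M) = trace (diagonalScale b U * (1 - A * Ad)) :=
    hM ▸ trace_mul_diagonalScale b U _
  have hobj : Set.EqOn (fun U => (trace (U * M)).re)
      ((fun V => (trace (V * (1 - A * Ad))).re) ∘ diagonalScale b)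
      (posSemidefWithDiag 1) := fun U _ => congrArg Complex.re (htrace U)
  refine ⟨hbij, fun U _ _ => htrace U, ?_, fun U hU hdiag hmin V' hV' hdiag' => ?_⟩
  · convert congrArg sInf (hbij.image_eq_image_of_eqOn_comp hobj) using 2 <;>
      ext r <;> simp [posSemidefWithDiag, eq_comm, and_assoc]
  · exact hbij.isMinOn_of_eqOn_comp hobj ⟨hU, hdiag⟩ (fun U' hU' => hmin U' hU'.1 hU'.2)
      ⟨hV', hdiag'⟩

/-- For `bᵢ ≠ 0`, the map `U ↦ diag(b) U diag(b)` is a bijection from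
`{U ⪰ 0 : diag(U) = 1}` onto `{V ⪰ 0 : diag(V) = b²}` satisfying
`Tr(UM) = Tr(V(I − AA†))` with `M = diag(b)(I − AA†)diag(b)`; consequently the PhaseCut
problem and its scaled version have the same optimal value and the bijection maps
optimal solutions to optimal solutions. -/
theorem phaseCut_scaling_bijection {n p : ℕ}
    (A : Matrix (Fin n) (Fin p) ℂ) (Ad : Matrix (Fin p) (Fin n) ℂ)
    (hPenrose : A * Ad * A = A ∧ Ad * A * Ad = Ad ∧
      (A * Ad)ᴴ = A * Ad ∧ (Ad * A)ᴴ = Ad * A)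
    (b : Fin n → ℝ) (hb : ∀ i, b i ≠ 0)
    (M : Matrix (Fin n) (Fin n) ℂ)
    (hM : M = (Matrix.diagonal fun i => (b i : ℂ)) * (1 - A * Ad) *
      (Matrix.diagonal fun i => (b i : ℂ))) :
    Set.BijOn
      (fun U : Matrix (Fin n) (Fin n) ℂ =>
        (Matrix.diagonal fun i => (b i : ℂ)) * U * (Matrix.diagonal fun i => (b i : ℂ)))
      {U : Matrix (Fin n) (Fin n) ℂ | U.PosSemidef ∧ ∀ i, U i i = 1}
      {V : Matrix (Fin n) (Fin n) ℂ | V.PosSemidef ∧ ∀ i, V i i = ((b i : ℂ)) ^ 2} ∧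
    (∀ U : Matrix (Fin n) (Fin n) ℂ, U.PosSemidef → (∀ i, U i i = 1) →
      Matrix.trace (U * M) =
        Matrix.trace (((Matrix.diagonal fun i => (b i : ℂ)) * U *
          (Matrix.diagonal fun i => (b i : ℂ))) * (1 - A * Ad))) ∧
    sInf {r : ℝ | ∃ U : Matrix (Fin n) (Fin n) ℂ, U.PosSemidef ∧ (∀ i, U i i = 1) ∧
        r = (Matrix.trace (U * M)).re} =
      sInf {r : ℝ | ∃ V : Matrix (Fin n) (Fin n) ℂ, V.PosSemidef ∧
        (∀ i, V i i = ((b i : ℂ)) ^ 2) ∧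
        r = (Matrix.trace (V * (1 - A * Ad))).re} ∧
    (∀ U : Matrix (Fin n) (Fin n) ℂ, U.PosSemidef → (∀ i, U i i = 1) →
      (∀ U' : Matrix (Fin n) (Fin n) ℂ, U'.PosSemidef → (∀ i, U' i i = 1) →
        (Matrix.trace (U * M)).re ≤ (Matrix.trace (U' * M)).re) →
      ∀ V' : Matrix (Fin n) (Fin n) ℂ, V'.PosSemidef → (∀ i, V' i i = ((b i : ℂ)) ^ 2) →
        (Matrix.trace (((Matrix.diagonal fun i => (b i : ℂ)) * U *
          (Matrix.diagonal fun i => (b i : ℂ))) * (1 - A * Ad))).re ≤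
          (Matrix.trace (V' * (1 - A * Ad))).re) :=
  phaseCut_scaling_bijection_general A Ad b hb M hM
end

section
/- Let A ∈ ℂ^{n×p} and b ∈ ℝⁿ with b_i ≠ 0 for all i, let M = diag(b)(I − AA†)diag(b), and define Φ : H_p → H_n by Φ(X) = diag(b)⁻¹ A X A* diag(b)⁻¹. Then for U ∈ H_n, the following are equivalent: (i) U ⪰ 0 and Tr(MU) = 0; (ii) there exists X ∈ H_p with X ⪰ 0 and U = Φ(X). Moreover, in case (i) one may take X = A† diag(b) U diag(b) A†*. -/
open Matrix ComplexOrder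

/-!
With `D = diag(b)` and `V = D U D ⪰ 0`, one has `Tr(M U) = Tr(Q V) = Tr(Q V Q)` for the orthogonal
projector `Q = I - AA†`, and writing `V = B* B` shows that `Tr(Q V Q) = ‖B Q‖²` vanishes only if
`V Q = 0`. Then `V = P V P` for `P = AA† = A†* A*`, so `U = D⁻¹ V D⁻¹ = Φ(A† V A†*)`.
Conversely `Q A = 0` kills `Tr(M Φ(X))`.
-/

theorem IsSelfAdjoint.mul_mul_eq_self_of_mul_one_sub_eq_zero {R : Type*} [Ring R] [StarRing R]
    {P V : R} (hP : IsSelfAdjoint P) (hV : IsSelfAdjoint V) (h : V * (1 - P) = 0) :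
    P * V * P = V := by
  have hVP : V * P = V := by rw [mul_sub, mul_one, sub_eq_zero] at h; exact h.symm
  have hPV : P * V = V := by simpa [hP.star_eq, hV.star_eq] using congr(star $hVP)
  rw [hPV, hVP]

namespace Matrix

variable {m n : Type*} [Fintype m] [Fintype n]

theorem isStarProjection_mul_of_mul_mul_eq {R : Type*} [Semiring R] [Star R]
    {A : Matrix n m R} {G : Matrix m n R} (hAGA : A * G * A = A) (hAG : (A * G)ᴴ = A * G) :
    IsStarProjection (A * G) :=
  ⟨by rw [IsIdempotentElem, ← Matrix.mul_assoc, hAGA], hAG⟩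

variable [DecidableEq n]

section Conjugation

variable {R : Type*} [CommRing R] {D : Matrix n n R}

theorem nonsing_inv_mul_mul_mul_nonsing_inv (hD : IsUnit D.det) (W : Matrix n n R) :
    D⁻¹ * (D * W * D) * D⁻¹ = W := by
  simp only [Matrix.mul_assoc, mul_nonsing_inv _ hD, Matrix.mul_one,
    nonsing_inv_mul_cancel_left _ _ hD]

theorem mul_mul_nonsing_inv_mul_mul (hD : IsUnit D.det) (W : Matrix n n R) :
    D * (D⁻¹ * W * D⁻¹) * D = W := by
  simp only [Matrix.mul_assoc, nonsing_inv_mul _ hD, Matrix.mul_one,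
    mul_nonsing_inv_cancel_left _ _ hD]

end Conjugation

variable {𝕜 : Type*} [RCLike 𝕜]

open scoped Matrix.Norms.L2Operator MatrixOrder in
theorem PosSemidef.mul_eq_zero_of_trace_conjTranspose_mul_mul_eq_zero {V : Matrix n n 𝕜}
    (hV : V.PosSemidef) {C : Matrix n m 𝕜} (h : (Cᴴ * V * C).trace = 0) : V * C = 0 := by
  obtain ⟨B, rfl⟩ := CStarAlgebra.nonneg_iff_eq_star_mul_self.mp hV.nonneg
  have hBC : B * C = 0 := by
    rw [← trace_conjTranspose_mul_self_eq_zero_iff, conjTranspose_mul]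
    simpa only [star_eq_conjTranspose, Matrix.mul_assoc] using h
  rw [Matrix.mul_assoc, hBC, Matrix.mul_zero]

theorem PosSemidef.mul_eq_zero_of_trace_mul_eq_zero_s18 {V Q : Matrix n n 𝕜}
    (hV : V.PosSemidef) (hQ : IsStarProjection Q) (h : (Q * V).trace = 0) : V * Q = 0 := by
  refine hV.mul_eq_zero_of_trace_conjTranspose_mul_mul_eq_zero ?_
  rwa [← star_eq_conjTranspose, hQ.isSelfAdjoint.star_eq, trace_mul_cycle,
    hQ.isIdempotentElem.eq]

theorem PosSemidef.mul_mul_conjTranspose_eq_self_of_trace_one_sub_mul_eq_zero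
    {A : Matrix n m 𝕜} {G : Matrix m n 𝕜} (hAGA : A * G * A = A) (hAG : (A * G)ᴴ = A * G)
    {V : Matrix n n 𝕜} (hV : V.PosSemidef) (h : ((1 - A * G) * V).trace = 0) :
    A * (G * V * Gᴴ) * Aᴴ = V := by
  have hP := isStarProjection_mul_of_mul_mul_eq hAGA hAG
  have hPVP : A * G * V * (A * G) = V :=
    hP.isSelfAdjoint.mul_mul_eq_self_of_mul_one_sub_eq_zero hV.isHermitian
      (hV.mul_eq_zero_of_trace_mul_eq_zero_s18 hP.one_sub h)
  calc A * (G * V * Gᴴ) * Aᴴ = A * G * V * (A * G)ᴴ := by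
        rw [conjTranspose_mul]
        simp only [Matrix.mul_assoc]
    _ = V := by rw [hAG, hPVP]

end Matrix

theorem phaseCut_kernel_characterization_general {n p : ℕ}
    (A : Matrix (Fin n) (Fin p) ℂ) (Ad : Matrix (Fin p) (Fin n) ℂ)
    (hPenrose : A * Ad * A = A ∧ Ad * A * Ad = Ad ∧
      (A * Ad)ᴴ = A * Ad ∧ (Ad * A)ᴴ = Ad * A)
    (b : Fin n → ℝ) (hb : ∀ i, b i ≠ 0)
    (M : Matrix (Fin n) (Fin n) ℂ)
    (hM : M = (Matrix.diagonal fun i => (b i : ℂ)) * (1 - A * Ad) *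
      (Matrix.diagonal fun i => (b i : ℂ)))
    (U : Matrix (Fin n) (Fin n) ℂ) :
    ((U.PosSemidef ∧ Matrix.trace (M * U) = 0) ↔
      (∃ X : Matrix (Fin p) (Fin p) ℂ, X.PosSemidef ∧
        U = (Matrix.diagonal fun i => (b i : ℂ))⁻¹ * (A * X * Aᴴ) *
          (Matrix.diagonal fun i => (b i : ℂ))⁻¹)) ∧
    (U.PosSemidef ∧ Matrix.trace (M * U) = 0 →
      (Ad * (Matrix.diagonal fun i => (b i : ℂ)) * U *
        (Matrix.diagonal fun i => (b i : ℂ)) * Adᴴ).PosSemidef ∧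
      U = (Matrix.diagonal fun i => (b i : ℂ))⁻¹ *
        (A * (Ad * (Matrix.diagonal fun i => (b i : ℂ)) * U *
          (Matrix.diagonal fun i => (b i : ℂ)) * Adᴴ) * Aᴴ) *
        (Matrix.diagonal fun i => (b i : ℂ))⁻¹) := by
  set D : Matrix (Fin n) (Fin n) ℂ := diagonal fun i => (b i : ℂ)
  have hDH : Dᴴ = D := by simp [D]
  have hD : IsUnit D.det := by simpa [D, det_diagonal, Finset.prod_ne_zero_iff] using hb
  have htrace : ∀ W, (M * W).trace = ((1 - A * Ad) * (D * W * D)).trace := fun W => by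
    rw [hM, Matrix.mul_assoc D, Matrix.mul_assoc D, trace_mul_comm D]
    simp only [Matrix.mul_assoc]
  have forward : U.PosSemidef ∧ (M * U).trace = 0 →
      (Ad * D * U * D * Adᴴ).PosSemidef ∧
        U = D⁻¹ * (A * (Ad * D * U * D * Adᴴ) * Aᴴ) * D⁻¹ := by
    rintro ⟨hU, hMU⟩
    have hV : (D * U * D).PosSemidef := by simpa [hDH] using hU.conjTranspose_mul_mul_same D
    have hΦ := hV.mul_mul_conjTranspose_eq_self_of_trace_one_sub_mul_eq_zero hPenrose.1
      hPenrose.2.2.1 (htrace U ▸ hMU)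
    refine ⟨by simpa only [Matrix.mul_assoc] using hV.mul_mul_conjTranspose_same Ad, ?_⟩
    calc U = D⁻¹ * (D * U * D) * D⁻¹ := (nonsing_inv_mul_mul_mul_nonsing_inv hD U).symm
      _ = D⁻¹ * (A * (Ad * (D * U * D) * Adᴴ) * Aᴴ) * D⁻¹ := by rw [hΦ]
      _ = D⁻¹ * (A * (Ad * D * U * D * Adᴴ) * Aᴴ) * D⁻¹ := by simp only [Matrix.mul_assoc]
  refine ⟨⟨fun h => ⟨_, forward h⟩, ?_⟩, forward⟩
  rintro ⟨X, hX, rfl⟩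
  refine ⟨?_, ?_⟩
  · simpa [conjTranspose_nonsing_inv, hDH] using
      (hX.mul_mul_conjTranspose_same A).mul_mul_conjTranspose_same D⁻¹
  · rw [htrace, mul_mul_nonsing_inv_mul_mul hD, ← Matrix.mul_assoc, ← Matrix.mul_assoc,
      Matrix.sub_mul, Matrix.one_mul, hPenrose.1, sub_self, Matrix.zero_mul, Matrix.zero_mul,
      trace_zero]

/-- For `bᵢ ≠ 0`, `M = diag(b)(I − AA†)diag(b)` and
`Φ(X) = diag(b)⁻¹ A X A* diag(b)⁻¹`, a Hermitian `U` satisfies (i) `U ⪰ 0` and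
`Tr(MU) = 0` iff (ii) `U = Φ(X)` for some `X ⪰ 0`; moreover in case (i) one may take
`X = A† diag(b) U diag(b) A†*`. -/
theorem phaseCut_kernel_characterization {n p : ℕ}
    (A : Matrix (Fin n) (Fin p) ℂ) (Ad : Matrix (Fin p) (Fin n) ℂ)
    (hPenrose : A * Ad * A = A ∧ Ad * A * Ad = Ad ∧
      (A * Ad)ᴴ = A * Ad ∧ (Ad * A)ᴴ = Ad * A)
    (b : Fin n → ℝ) (hb : ∀ i, b i ≠ 0)
    (M : Matrix (Fin n) (Fin n) ℂ)
    (hM : M = (Matrix.diagonal fun i => (b i : ℂ)) * (1 - A * Ad) *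
      (Matrix.diagonal fun i => (b i : ℂ)))
    (U : Matrix (Fin n) (Fin n) ℂ) (hU : U.IsHermitian) :
    ((U.PosSemidef ∧ Matrix.trace (M * U) = 0) ↔
      (∃ X : Matrix (Fin p) (Fin p) ℂ, X.PosSemidef ∧
        U = (Matrix.diagonal fun i => (b i : ℂ))⁻¹ * (A * X * Aᴴ) *
          (Matrix.diagonal fun i => (b i : ℂ))⁻¹)) ∧
    (U.PosSemidef ∧ Matrix.trace (M * U) = 0 →
      (Ad * (Matrix.diagonal fun i => (b i : ℂ)) * U *
        (Matrix.diagonal fun i => (b i : ℂ)) * Adᴴ).PosSemidef ∧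
      U = (Matrix.diagonal fun i => (b i : ℂ))⁻¹ *
        (A * (Ad * (Matrix.diagonal fun i => (b i : ℂ)) * U *
          (Matrix.diagonal fun i => (b i : ℂ)) * Adᴴ) * Aᴴ) *
        (Matrix.diagonal fun i => (b i : ℂ))⁻¹) :=
  phaseCut_kernel_characterization_general A Ad hPenrose b hb M hM U
end
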